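/- arXiv:1012.4196 — 10 statements merged into one kernel-verified Lean document; each statement's English description precedes it below -/
import Mathlib

section
/- For all natural numbers k and j with j ≤ k, the following identity holds in ℚ: (j!/k!) · ∑_T ∏_{t∈T} t = ∑_{(i_1,…,i_j)} 1/(i_1 i_2 ⋯ i_j), where the left-hand sum ranges over all subsets T of {1, 2, …, k−1} of cardinality k−j (each contributing the product of its elements, the empty product being 1), and the right-hand sum ranges over all j-tuples (i_1,…,i_j) of positive integers with i_1 + ⋯ + i_j = k. -/
/-!
Both sides equal `j! c(k, j) / k!`, where `c(k, j)` is the unsigned Stirling number of the first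
kind. The elementary symmetric sum `e_{k-j}(1, …, k-1)` obeys the recurrence of `c(k, j)` by
splitting off the largest element. The sum over compositions is the coefficient of `X^k` in `L^j`,
where `L = -log (1 - X) = ∑ Xⁱ / i`; since `(1 - X) L' = 1`, we get
`(1 - X) (L^{j+1})' = (j+1) L^j`, and comparing coefficients gives the recurrence of
`k! / j! · [X^k] L^j`.
-/

open Finset PowerSeries Nat

namespace Finset

theorem sum_powersetCard_succ_insert {α β : Type*} [AddCommMonoid β] [DecidableEq α] {a : α}
    {s : Finset α} (ha : a ∉ s) (n : ℕ) (f : Finset α → β) :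
    ∑ t ∈ powersetCard (n + 1) (insert a s), f t =
      ∑ t ∈ powersetCard (n + 1) s, f t + ∑ t ∈ powersetCard n s, f (insert a t) := by
  rw [powersetCard_succ_insert ha, sum_union, sum_image]
  · exact insert_erase_invOn.2.injOn.mono fun t ht ↦ notMem_mono (mem_powersetCard.1 ht).1 ha
  · aesop (add simp [disjoint_left, insert_subset_iff])

theorem sum_powersetCard_Icc_prod_eq_stirlingFirst {R : Type*} [CommSemiring R] (n d : ℕ) :
    ∑ t ∈ powersetCard d (Icc 1 n), ∏ i ∈ t, (i : R) =
      stirlingFirst (n + 1) (n + 1 - d) := by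
  induction n generalizing d with
  | zero =>
    cases d with
    | zero => simp [stirlingFirst_self]
    | succ d => rw [powersetCard_eq_empty.2 (by simp)]; simp
  | succ n ih =>
    cases d with
    | zero => simp [stirlingFirst_self]
    | succ d =>
      have hn : n + 1 ∉ Icc 1 n := by simp
      rw [← insert_Icc_right_eq_Icc_add_one (by omega), sum_powersetCard_succ_insert hn,
        sum_congr rfl fun t ht ↦ prod_insert (notMem_mono (mem_powersetCard.1 ht).1 hn),
        ← mul_sum, ih, ih]
      rcases Nat.lt_or_ge n d with hnd | hdn
      · simp [Nat.sub_eq_zero_of_le hnd, Nat.sub_eq_zero_of_le hnd.le]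
      · obtain ⟨m, rfl⟩ := Nat.exists_eq_add_of_le hdn
        rw [show d + m + 1 + 1 - (d + 1) = m + 1 by omega, show d + m + 1 - (d + 1) = m by omega,
          show d + m + 1 - d = m + 1 by omega, stirlingFirst_succ_succ (d + m + 1) m]
        push_cast
        ring

end Finset

namespace PowerSeries

theorem coeff_pow_eq_sum_antidiagonalTuple {R : Type*} [CommSemiring R] (f : R⟦X⟧) (j k : ℕ) :
    coeff k (f ^ j) = ∑ i ∈ Finset.Nat.antidiagonalTuple j k, ∏ s, coeff (i s) f := by
  rw [← Fin.prod_const, coeff_prod, finsuppAntidiag, sum_map,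
    ← piAntidiag_univ_fin_eq_antidiagonalTuple]
  exact sum_attach (univ.piAntidiag k) fun i ↦ ∏ s, coeff (i s) f

variable (K : Type*) [Field K]

/-- `-log (1 - X) = ∑_{i ≥ 1} Xⁱ / i`; the term `i = 0` is `0⁻¹ = 0`. -/
noncomputable def negLogOneSub : K⟦X⟧ :=
  mk fun i ↦ (i : K)⁻¹

variable {K}

theorem coeff_negLogOneSub_pow (j k : ℕ) :
    coeff k (negLogOneSub K ^ j) =
      ∑ i ∈ (Finset.Nat.antidiagonalTuple j k).filter (fun i ↦ ∀ s, 0 < i s),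
        1 / ∏ s, (i s : K) := by
  rw [coeff_pow_eq_sum_antidiagonalTuple, sum_filter_of_ne]
  · refine sum_congr rfl fun i _ ↦ ?_
    simp [negLogOneSub, prod_inv_distrib]
  · intro i _ hi s
    by_contra! hs
    apply hi
    rw [prod_eq_zero (mem_univ s) (by simp [Nat.le_zero.1 hs]), div_zero]

variable [CharZero K]

theorem derivative_negLogOneSub : d⁄dX K (negLogOneSub K) = mk 1 := by
  ext n
  have hn : (n : K) + 1 ≠ 0 := Nat.cast_add_one_ne_zero n
  simp [coeff_derivative, negLogOneSub, inv_mul_cancel₀ hn]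

theorem derivative_negLogOneSub_pow_mul_one_sub_X (j : ℕ) :
    d⁄dX K (negLogOneSub K ^ (j + 1)) * (1 - X) = C ((j : K) + 1) * negLogOneSub K ^ j := by
  rw [derivative_pow, mul_assoc, mul_assoc, derivative_negLogOneSub, mk_one_mul_one_sub_eq_one]
  simp

theorem succ_mul_coeff_succ_negLogOneSub_pow (j k : ℕ) :
    (k + 1) * coeff (k + 1) (negLogOneSub K ^ (j + 1)) =
      k * coeff k (negLogOneSub K ^ (j + 1)) + (j + 1) * coeff k (negLogOneSub K ^ j) := by
  have h := congrArg (coeff k) (derivative_negLogOneSub_pow_mul_one_sub_X (K := K) j)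
  rw [mul_sub, mul_one, map_sub, coeff_derivative, coeff_C_mul] at h
  cases k with
  | zero =>
    rw [coeff_zero_mul_X] at h
    push_cast
    linear_combination h
  | succ k =>
    rw [coeff_succ_mul_X, coeff_derivative] at h
    push_cast at h ⊢
    linear_combination h

theorem factorial_mul_coeff_negLogOneSub_pow (j k : ℕ) :
    (k ! : K) * coeff k (negLogOneSub K ^ j) = j ! * stirlingFirst k j := by
  induction k generalizing j with
  | zero => cases j <;> simp [negLogOneSub]
  | succ k ih =>
    cases j with
    | zero => simp
    | succ j =>
      calc ((k + 1)! : K) * coeff (k + 1) (negLogOneSub K ^ (j + 1))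
          = k ! * ((k + 1) * coeff (k + 1) (negLogOneSub K ^ (j + 1))) := by
            push_cast [factorial_succ]; ring
        _ = k * (k ! * coeff k (negLogOneSub K ^ (j + 1))) +
              (j + 1) * (k ! * coeff k (negLogOneSub K ^ j)) := by
            rw [succ_mul_coeff_succ_negLogOneSub_pow]; ring
        _ = (j + 1)! * stirlingFirst (k + 1) (j + 1) := by
            rw [ih, ih, stirlingFirst_succ_succ, factorial_succ]; push_cast; ring

end PowerSeries

/-- The combinatorial identity (3.16):
`(j!/k!) · ∑_{0<t₁<⋯<t_{k-j}<k} t₁⋯t_{k-j} = ∑_{i₁+⋯+i_j=k, iₛ ≥ 1} 1/(i₁⋯i_j)`. -/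
theorem log_taylor_combinatorial_identity (k j : ℕ) (hjk : j ≤ k) :
    (j.factorial : ℚ) / (k.factorial : ℚ) *
        ∑ T ∈ Finset.powersetCard (k - j) (Finset.Icc 1 (k - 1)), ∏ t ∈ T, (t : ℚ) =
      ∑ i ∈ (Finset.Nat.antidiagonalTuple j k).filter (fun i => ∀ s, 0 < i s),
        1 / ∏ s, (i s : ℚ) := by
  have hsymm : ∑ T ∈ powersetCard (k - j) (Icc 1 (k - 1)), ∏ t ∈ T, (t : ℚ) =
      stirlingFirst k j := by
    rcases k with _ | k
    · simp [Nat.le_zero.1 hjk]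
    · rw [sum_powersetCard_Icc_prod_eq_stirlingFirst, Nat.add_sub_cancel,
        Nat.sub_sub_self hjk]
  rw [hsymm, ← coeff_negLogOneSub_pow, div_mul_eq_mul_div, div_eq_iff (by positivity),
    ← factorial_mul_coeff_negLogOneSub_pow, mul_comm]
end

section
/- (Lubell's identity.) Let N and j be positive integers. Then ∑ 1/(w_1 ⋯ w_j), summed over all j-tuples (w_1,…,w_j) of positive integers with w_1 + ⋯ + w_j ≤ N, equals ∑ 1/(w_1 ⋯ w_j), summed over all j-tuples (w_1,…,w_j) of pairwise distinct positive integers with each w_i ≤ N. This is an identity of rational numbers. -/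
/-!
Both sides, as functions `S N j`, satisfy `S N 0 = 1`, `S 0 (j + 1) = 0` and
`S (N + 1) (j + 1) = S N (j + 1) + (j + 1) / (N + 1) * S N j`.

For tuples with `∑ w ≤ N + 1`, those with sum exactly `N + 1` satisfy
`1 / ∏ w = 1 / (N + 1) * ∑ i, 1 / ∏ k ≠ i, w k`, and deleting the `i`-th entry is a bijection
from them onto the `j`-tuples of positive integers with sum `≤ N`.
For distinct tuples bounded by `N + 1`, those containing `N + 1` arise exactly once by inserting
`N + 1` at one of `j + 1` positions into a distinct `j`-tuple bounded by `N`.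
-/

open Finset Fintype Function

theorem Fin.insertNth_injective_of_notMem {α : Type*} {n : ℕ} {p : Fin (n + 1)} {x : α}
    {v : Fin n → α} (hx : x ∉ Set.range v) (hv : Injective v) :
    Injective (p.insertNth x v) := by
  intro a b hab
  induction a using p.succAboveCases <;> induction b using p.succAboveCases <;>
    simp_all [hv.eq_iff]

theorem Fin.sum_div_prod_eq_sum_one_div_prod_removeNth {K : Type*} [Field K] {n : ℕ}
    {x : Fin (n + 1) → K} (hx : ∀ i, x i ≠ 0) :
    (∑ i, x i) / ∏ i, x i = ∑ i : Fin (n + 1), 1 / ∏ k, i.removeNth x k := by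
  rw [sum_div]
  refine sum_congr rfl fun i _ => ?_
  rw [← Fin.mul_prod_removeNth i x]
  field_simp [hx i]

def recipProdSum {j : ℕ} (s : Finset (Fin j → ℕ)) : ℚ := ∑ w ∈ s, 1 / ∏ i, (w i : ℚ)

def boundedSumTuples (N j : ℕ) : Finset (Fin j → ℕ) :=
  {w ∈ piFinset fun _ => Icc 1 N | ∑ i, w i ≤ N}

def distinctTuples (N j : ℕ) : Finset (Fin j → ℕ) :=
  {w ∈ piFinset fun _ => Icc 1 N | Injective w}

theorem mem_boundedSumTuples {N j : ℕ} {w : Fin j → ℕ} :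
    w ∈ boundedSumTuples N j ↔ (∀ i, 0 < w i) ∧ ∑ i, w i ≤ N := by
  simp only [boundedSumTuples, mem_filter, mem_piFinset, mem_Icc]
  refine ⟨fun h => ⟨fun i => (h.1 i).1, h.2⟩, fun h => ⟨fun i => ⟨h.1 i, ?_⟩, h.2⟩⟩
  exact (single_le_sum (fun k _ => Nat.zero_le (w k)) (mem_univ i)).trans h.2

theorem mem_distinctTuples {N j : ℕ} {w : Fin j → ℕ} :
    w ∈ distinctTuples N j ↔ (∀ i, w i ∈ Icc 1 N) ∧ Injective w := by
  simp [distinctTuples]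

theorem sum_boundedSumTuples_removeNth {M : Type*} [AddCommMonoid M] {N j : ℕ}
    (i : Fin (j + 1)) (f : (Fin j → ℕ) → M) :
    ∑ w ∈ boundedSumTuples (N + 1) (j + 1) with ∑ k, w k = N + 1, f (i.removeNth w) =
      ∑ v ∈ boundedSumTuples N j, f v := by
  refine sum_nbij' i.removeNth (fun v => i.insertNth (N + 1 - ∑ k, v k) v) ?_ ?_ ?_ ?_
    fun _ _ => rfl
  · intro w hw
    simp only [mem_filter, mem_boundedSumTuples] at hw ⊢
    have hsplit := Fin.add_sum_removeNth i w
    have hwi := hw.1.1 i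
    exact ⟨fun k => hw.1.1 _, by omega⟩
  · intro v hv
    simp only [mem_filter, mem_boundedSumTuples] at hv ⊢
    simp only [Fin.forall_iff_succAbove i, Fin.insertNth_apply_same,
      Fin.insertNth_apply_succAbove, Fin.sum_insertNth]
    exact ⟨⟨⟨by omega, hv.1⟩, by omega⟩, by omega⟩
  · intro w hw
    simp only [mem_filter, mem_boundedSumTuples] at hw
    have hsplit := Fin.add_sum_removeNth i w
    rw [show N + 1 - ∑ k, i.removeNth w k = w i by omega, Fin.insertNth_self_removeNth]
  · intro v _
    simp

theorem recipProdSum_boundedSumTuples_succ (N j : ℕ) :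
    recipProdSum (boundedSumTuples (N + 1) (j + 1)) =
      recipProdSum (boundedSumTuples N (j + 1)) +
        (j + 1) / (N + 1) * recipProdSum (boundedSumTuples N j) := by
  have hlow : {w ∈ boundedSumTuples (N + 1) (j + 1) | ∑ k, w k ≤ N} =
      boundedSumTuples N (j + 1) := by
    ext w
    simp only [mem_filter, mem_boundedSumTuples]
    grind
  have htop : {w ∈ boundedSumTuples (N + 1) (j + 1) | ¬∑ k, w k ≤ N} =
      {w ∈ boundedSumTuples (N + 1) (j + 1) | ∑ k, w k = N + 1} := by
    refine filter_congr fun w hw => ?_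
    rw [mem_boundedSumTuples] at hw
    omega
  have hterm : ∀ w ∈ {w ∈ boundedSumTuples (N + 1) (j + 1) | ∑ k, w k = N + 1},
      1 / ∏ k, (w k : ℚ) =
        1 / (N + 1) * ∑ i : Fin (j + 1), 1 / ∏ k, i.removeNth (fun k => (w k : ℚ)) k := by
    intro w hw
    rw [mem_filter, mem_boundedSumTuples] at hw
    have hsum : ∑ k, (w k : ℚ) = N + 1 := by exact_mod_cast hw.2
    rw [← Fin.sum_div_prod_eq_sum_one_div_prod_removeNth fun k => by
      exact_mod_cast (hw.1.1 k).ne', hsum]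
    field_simp
  rw [recipProdSum, ← sum_filter_add_sum_filter_not _ (fun w => ∑ k, w k ≤ N), hlow, htop,
    sum_congr rfl hterm, ← mul_sum, sum_comm]
  congr 1
  have hfiber : ∀ i : Fin (j + 1),
      ∑ w ∈ boundedSumTuples (N + 1) (j + 1) with ∑ k, w k = N + 1,
        1 / ∏ k, i.removeNth (fun k => (w k : ℚ)) k = recipProdSum (boundedSumTuples N j) :=
    fun i => sum_boundedSumTuples_removeNth i fun v => 1 / ∏ k, (v k : ℚ)
  simp only [hfiber, sum_const, card_univ, Fintype.card_fin, nsmul_eq_mul]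
  push_cast
  ring

theorem insertNth_mem_distinctTuples_succ {N j : ℕ} (i : Fin (j + 1)) {v : Fin j → ℕ}
    (hv : v ∈ distinctTuples N j) : i.insertNth (N + 1) v ∈ distinctTuples (N + 1) (j + 1) := by
  rw [mem_distinctTuples] at hv ⊢
  refine ⟨?_, Fin.insertNth_injective_of_notMem ?_ hv.2⟩
  · simp only [Fin.forall_iff_succAbove i, Fin.insertNth_apply_same,
      Fin.insertNth_apply_succAbove, mem_Icc]
    exact ⟨by omega, fun k => by have := mem_Icc.1 (hv.1 k); omega⟩
  · rintro ⟨k, hk⟩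
    have := mem_Icc.1 (hv.1 k)
    omega

theorem removeNth_mem_distinctTuples {N j : ℕ} {i : Fin (j + 1)} {w : Fin (j + 1) → ℕ}
    (hw : w ∈ distinctTuples (N + 1) (j + 1)) (hi : w i = N + 1) :
    i.removeNth w ∈ distinctTuples N j := by
  rw [mem_distinctTuples] at hw ⊢
  refine ⟨fun k => ?_, hw.2.comp Fin.succAbove_right_injective⟩
  have hne : w (i.succAbove k) ≠ w i := hw.2.ne (Fin.succAbove_ne i k)
  have := mem_Icc.1 (hw.1 (i.succAbove k))
  rw [Fin.removeNth_apply, mem_Icc]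
  omega

theorem sum_distinctTuples_succ_with_exists_eq {M : Type*} [AddCommMonoid M] {N j : ℕ}
    (f : (Fin (j + 1) → ℕ) → M) :
    ∑ w ∈ distinctTuples (N + 1) (j + 1) with ∃ k, w k = N + 1, f w =
      ∑ i : Fin (j + 1), ∑ v ∈ distinctTuples N j, f (i.insertNth (N + 1) v) := by
  rw [← sum_product' univ]
  symm
  refine sum_bij (fun p _ => p.1.insertNth (N + 1) p.2) ?_ ?_ ?_ fun _ _ => rfl
  · rintro ⟨i, v⟩ hv
    rw [mem_product] at hv
    exact mem_filter.2
      ⟨insertNth_mem_distinctTuples_succ i hv.2, i, Fin.insertNth_apply_same ..⟩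
  · rintro ⟨i, v⟩ hv ⟨i', v'⟩ _ heq
    have hinj := (mem_distinctTuples.1
      (insertNth_mem_distinctTuples_succ i (mem_product.1 hv).2)).2
    have hii' : i = i' := hinj <| by
      simp only at heq
      rw [Fin.insertNth_apply_same, heq, Fin.insertNth_apply_same]
    subst hii'
    simpa using heq
  · intro w hw
    obtain ⟨hw, i, hwi⟩ := mem_filter.1 hw
    refine ⟨(i, i.removeNth w),
      mem_product.2 ⟨mem_univ i, removeNth_mem_distinctTuples hw hwi⟩, ?_⟩
    simp only
    rw [← hwi, Fin.insertNth_self_removeNth]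

theorem recipProdSum_distinctTuples_succ (N j : ℕ) :
    recipProdSum (distinctTuples (N + 1) (j + 1)) =
      recipProdSum (distinctTuples N (j + 1)) +
        (j + 1) / (N + 1) * recipProdSum (distinctTuples N j) := by
  have hlow :
      {w ∈ distinctTuples (N + 1) (j + 1) | ¬∃ k, w k = N + 1} = distinctTuples N (j + 1) := by
    ext w
    simp only [mem_filter, mem_distinctTuples, mem_Icc]
    grind
  rw [recipProdSum, ← sum_filter_not_add_sum_filter _ (fun w => ∃ k, w k = N + 1), hlow,
    sum_distinctTuples_succ_with_exists_eq]
  congr 1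
  have hterm : ∀ (i : Fin (j + 1)) (v : Fin j → ℕ),
      1 / ∏ k, ((i.insertNth (N + 1) v : Fin (j + 1) → ℕ) k : ℚ) =
        1 / (N + 1) * (1 / ∏ k, (v k : ℚ)) := by
    intro i v
    rw [← Nat.cast_prod, Fin.prod_insertNth, Nat.cast_mul, Nat.cast_prod, Nat.cast_succ,
      one_div_mul_one_div]
  simp only [hterm, ← mul_sum, sum_const, card_univ, Fintype.card_fin, nsmul_eq_mul]
  rw [recipProdSum]
  push_cast
  ring

theorem recipProdSum_boundedSumTuples_eq_distinctTuples (N j : ℕ) :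
    recipProdSum (boundedSumTuples N j) = recipProdSum (distinctTuples N j) := by
  induction N generalizing j with
  | zero =>
    rcases j with _ | j <;> simp [recipProdSum, boundedSumTuples, distinctTuples, Injective]
  | succ N ih =>
    rcases j with _ | j
    · simp [recipProdSum, boundedSumTuples, distinctTuples, Injective]
    rw [recipProdSum_boundedSumTuples_succ, recipProdSum_distinctTuples_succ, ih, ih]

theorem lubell_identity_general (N j : ℕ) :
    ∑ w ∈ (Fintype.piFinset fun _ : Fin j => Finset.Icc 1 N).filter
        (fun w => ∑ i, w i ≤ N),
      1 / ∏ i, (w i : ℚ) =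
    ∑ w ∈ (Fintype.piFinset fun _ : Fin j => Finset.Icc 1 N).filter
        (fun w => Function.Injective w),
      1 / ∏ i, (w i : ℚ) :=
  recipProdSum_boundedSumTuples_eq_distinctTuples N j

/-- Lubell's identity: the sum of `1/(w₁⋯w_j)` over `j`-tuples of positive integers with
`w₁+⋯+w_j ≤ N` equals the sum of `1/(w₁⋯w_j)` over `j`-tuples of pairwise distinct
positive integers bounded by `N`. -/
theorem lubell_identity (N j : ℕ) (hN : 0 < N) (hj : 0 < j) :
    ∑ w ∈ (Fintype.piFinset fun _ : Fin j => Finset.Icc 1 N).filter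
        (fun w => ∑ i, w i ≤ N),
      1 / ∏ i, (w i : ℚ) =
    ∑ w ∈ (Fintype.piFinset fun _ : Fin j => Finset.Icc 1 N).filter
        (fun w => Function.Injective w),
      1 / ∏ i, (w i : ℚ) :=
  lubell_identity_general N j
end

section
/- Let k and j be positive integers. Then ∑ 1/(i_1 ⋯ i_j), summed over all j-tuples (i_1,…,i_j) of positive integers with i_1 + ⋯ + i_j = k, equals ∑ 1/(w_1 ⋯ w_j), summed over all j-tuples (w_1,…,w_j) of pairwise distinct elements of {1,…,k} whose maximum is exactly k. This is an identity of rational numbers. -/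
/-!
Put `C j k = ∑ ∏ₛ 1/iₛ` over all `j`-tuples of naturals summing to `k` (a tuple with a zero
entry contributes `1/0 = 0`, so the positivity filter is harmless) and
`D X r = ∑ ∏ᵢ 1/wᵢ` over injective `r`-tuples in `X`.

Since the coordinates of a composition are exchangeable, `k · C (r+1) k = (r+1) ∑ i₀ ∏ₛ 1/iₛ`,
and peeling off `i₀ = a ≥ 1` turns this into `(n+1) · C (r+1) (n+1) = (r+1) ∑_{m ≤ n} C r m`.
Sorting the injective tuples in `{1,…,n+1}` by the position of `n+1` gives
`D {1,…,n+1} (r+1) = D {1,…,n} (r+1) + (r+1)/(n+1) · D {1,…,n} r`. The two recursions agree,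
so `∑_{m ≤ n} C r m = D {1,…,n} r` by induction on `n`, and the right-hand side of the
theorem is exactly the new term `(r+1)/(n+1) · D {1,…,n} r = C (r+1) (n+1)`.
-/

open Finset Function

namespace Finset.Nat

theorem sum_antidiagonalTuple_comp_perm {M : Type*} [AddCommMonoid M] {j : ℕ}
    (σ : Equiv.Perm (Fin j)) (k : ℕ) (g : (Fin j → ℕ) → M) :
    ∑ i ∈ antidiagonalTuple j k, g (i ∘ σ) = ∑ i ∈ antidiagonalTuple j k, g i := by
  have hmem (τ : Equiv.Perm (Fin j)) (i : Fin j → ℕ) (hi : i ∈ antidiagonalTuple j k) :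
      i ∘ τ ∈ antidiagonalTuple j k :=
    mem_antidiagonalTuple.mpr ((Equiv.sum_comp τ i).trans (mem_antidiagonalTuple.mp hi))
  exact sum_nbij' (· ∘ σ) (· ∘ σ.symm) (hmem σ) (hmem σ.symm)
    (fun i _ => by ext; simp) (fun i _ => by ext; simp) (fun _ _ => rfl)

theorem sum_antidiagonalTuple_succ {M : Type*} [AddCommMonoid M] (j k : ℕ)
    (g : (Fin (j + 1) → ℕ) → M) :
    ∑ i ∈ antidiagonalTuple (j + 1) k, g i =
      ∑ p ∈ antidiagonal k, ∑ u ∈ antidiagonalTuple j p.2, g (Fin.cons p.1 u) := by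
  rw [sum_sigma']
  refine sum_nbij' (fun i => ⟨(i 0, k - i 0), Fin.tail i⟩) (fun x => Fin.cons x.1.1 x.2)
    ?_ ?_ ?_ ?_ ?_
  · intro i hi
    simp only [mem_sigma, mem_antidiagonalTuple,
      HasAntidiagonal.mem_antidiagonal, Fin.sum_univ_succ, Fin.tail] at hi ⊢
    omega
  · rintro ⟨⟨a, b⟩, u⟩ hx
    simp only [mem_sigma, mem_antidiagonalTuple,
      HasAntidiagonal.mem_antidiagonal, Fin.sum_cons] at hx ⊢
    omega
  · intro i _
    exact Fin.cons_self_tail i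
  · rintro ⟨⟨a, b⟩, u⟩ hx
    simp only [mem_sigma, mem_antidiagonalTuple,
      HasAntidiagonal.mem_antidiagonal] at hx
    simp [← hx.1, Fin.tail_cons]
  · intro i _
    simp

end Finset.Nat

section Compositions

variable {R : Type*} [CommSemiring R] (f : ℕ → R)

def compositionSum (j k : ℕ) : R :=
  ∑ i ∈ Nat.antidiagonalTuple j k, ∏ s, f (i s)

theorem compositionSum_zero_right (j : ℕ) : compositionSum f j 0 = f 0 ^ j := by
  simp [compositionSum, Nat.antidiagonalTuple_zero_right]

theorem compositionSum_zero_succ (k : ℕ) : compositionSum f 0 (k + 1) = 0 := by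
  simp [compositionSum, Nat.antidiagonalTuple_zero_succ]

theorem natCast_mul_compositionSum_succ (j k : ℕ) :
    k * compositionSum f (j + 1) k =
      (j + 1) * ∑ p ∈ antidiagonal k, p.1 * f p.1 * compositionSum f j p.2 := by
  have hcoord (s : Fin (j + 1)) :
      ∑ i ∈ Nat.antidiagonalTuple (j + 1) k, (i s : R) * ∏ t, f (i t) =
        ∑ i ∈ Nat.antidiagonalTuple (j + 1) k, (i 0 : R) * ∏ t, f (i t) := by
    rw [← Nat.sum_antidiagonalTuple_comp_perm (Equiv.swap 0 s)]
    refine sum_congr rfl fun i _ => ?_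
    simp only [comp_apply, Equiv.swap_apply_right]
    rw [Equiv.prod_comp (Equiv.swap 0 s) (fun t => f (i t))]
  calc (k : R) * compositionSum f (j + 1) k
      = ∑ s : Fin (j + 1), ∑ i ∈ Nat.antidiagonalTuple (j + 1) k, (i s : R) * ∏ t, f (i t) := by
        rw [compositionSum, mul_sum, sum_comm]
        refine sum_congr rfl fun i hi => ?_
        rw [← sum_mul, ← Nat.cast_sum, (Nat.mem_antidiagonalTuple.mp hi)]
    _ = (j + 1) * ∑ i ∈ Nat.antidiagonalTuple (j + 1) k, (i 0 : R) * ∏ t, f (i t) := by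
        simp [hcoord]
    _ = (j + 1) * ∑ p ∈ antidiagonal k, p.1 * f p.1 * compositionSum f j p.2 := by
        simp only [Nat.sum_antidiagonalTuple_succ, compositionSum, mul_sum, Fin.prod_univ_succ,
          Fin.cons_zero, Fin.cons_succ, mul_assoc]

end Compositions

theorem Fin.insertNth_injective_iff {n : ℕ} {α : Type*} {p : Fin (n + 1)} {a : α}
    {x : Fin n → α} : Injective (p.insertNth a x) ↔ a ∉ Set.range x ∧ Injective x := by
  rw [← Fin.cons_comp_cycleRange, EquivLike.injective_comp, Fin.cons_injective_iff]

section InjectiveTuples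

variable {α R : Type*} [DecidableEq α] [CommSemiring R] (f : α → R)

def injectiveSum (X : Finset α) (r : ℕ) : R :=
  ∑ w ∈ (Fintype.piFinset fun _ : Fin r => X) with Injective w, ∏ i, f (w i)

theorem injectiveSum_zero (X : Finset α) : injectiveSum f X 0 = 1 := by
  simp [injectiveSum, injective_of_subsingleton]

theorem injectiveSum_empty (r : ℕ) : injectiveSum f ∅ r = 0 ^ r := by
  cases r <;> simp [injectiveSum, injective_of_subsingleton]

variable {f} {a : α} {X : Finset α}

theorem insertNth_mem_piFinset_insert_injective_iff (ha : a ∉ X) {r : ℕ} (s : Fin (r + 1))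
    (u : Fin r → α) :
    (s.insertNth a u ∈ Fintype.piFinset fun _ => insert a X) ∧ Injective (s.insertNth a u) ↔
      (u ∈ Fintype.piFinset fun _ => X) ∧ Injective u := by
  simp only [Fintype.mem_piFinset, Fin.forall_iff_succAbove s, Fin.insertNth_apply_same,
    Fin.insertNth_apply_succAbove, Fin.insertNth_injective_iff, Set.mem_range, not_exists,
    mem_insert, true_or, true_and]
  constructor
  · rintro ⟨hmem, hne, hinj⟩
    exact ⟨fun t => (hmem t).resolve_left (hne t), hinj⟩
  · rintro ⟨hmem, hinj⟩
    exact ⟨fun t => Or.inr (hmem t), fun t h => ha (h ▸ hmem t), hinj⟩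

theorem sum_injective_apply_eq (ha : a ∉ X) {r : ℕ} (s : Fin (r + 1)) :
    ∑ w ∈ (Fintype.piFinset fun _ => insert a X) with Injective w ∧ w s = a, ∏ i, f (w i) =
      f a * injectiveSum f X r := by
  rw [injectiveSum, mul_sum]
  refine sum_nbij' (fun w : Fin (r + 1) → α => s.removeNth w)
    (fun u : Fin r → α => s.insertNth a u) ?_ ?_ ?_ ?_ ?_
  · rintro w hw
    simp only [mem_filter] at hw ⊢
    obtain ⟨hmem, hinj, rfl⟩ := hw
    rw [← insertNth_mem_piFinset_insert_injective_iff ha s, Fin.insertNth_self_removeNth]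
    exact ⟨hmem, hinj⟩
  · intro u hu
    simp only [mem_filter] at hu ⊢
    rw [← insertNth_mem_piFinset_insert_injective_iff ha s] at hu
    exact ⟨hu.1, hu.2, Fin.insertNth_apply_same (α := fun _ => α) s a u⟩
  · intro w hw
    simp only [mem_filter] at hw
    rw [← hw.2.2, Fin.insertNth_self_removeNth]
  · intro u _
    exact Fin.removeNth_insertNth (α := fun _ => α) s a u
  · intro w hw
    simp only [mem_filter] at hw
    rw [Fin.prod_univ_succAbove _ s, hw.2.2]
    rfl

theorem sum_injective_exists_eq (ha : a ∉ X) {r : ℕ} :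
    ∑ w ∈ (Fintype.piFinset fun _ : Fin (r + 1) => insert a X) with Injective w ∧ ∃ s, w s = a,
      ∏ i, f (w i) = (r + 1) * (f a * injectiveSum f X r) := by
  have hunion : ((Fintype.piFinset fun _ : Fin (r + 1) => insert a X).filter
      fun w => Injective w ∧ ∃ s, w s = a) = univ.biUnion fun s =>
        (Fintype.piFinset fun _ => insert a X).filter fun w => Injective w ∧ w s = a := by
    ext w
    simp only [mem_filter, mem_biUnion, mem_univ, true_and]
    tauto
  rw [hunion, sum_biUnion, sum_congr rfl fun s _ => sum_injective_apply_eq ha s]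
  · simp
  · intro s _ t _ hst
    simp only [onFun, disjoint_left, mem_filter]
    rintro w ⟨_, hinj, hs⟩ ⟨_, _, ht⟩
    exact hst (hinj (hs.trans ht.symm))

theorem injectiveSum_insert (ha : a ∉ X) (r : ℕ) :
    injectiveSum f (insert a X) (r + 1) =
      injectiveSum f X (r + 1) + (r + 1) * (f a * injectiveSum f X r) := by
  rw [injectiveSum, ← sum_filter_add_sum_filter_not _ fun w => ∃ s, w s = a, filter_filter,
    sum_injective_exists_eq ha, add_comm, filter_filter]
  congr 2
  ext w
  simp only [mem_filter, Fintype.mem_piFinset, mem_insert, not_exists]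
  constructor
  · rintro ⟨hmem, hinj, hne⟩
    exact ⟨fun s => (hmem s).resolve_left (hne s), hinj⟩
  · rintro ⟨hmem, hinj⟩
    exact ⟨fun s => Or.inr (hmem s), hinj, fun s h => ha (h ▸ hmem s)⟩

end InjectiveTuples

section Harmonic

variable {K : Type*} [Field K] [CharZero K]

theorem succ_mul_compositionSum_inv (n r : ℕ) :
    ((n : K) + 1) * compositionSum (fun a : ℕ => (a : K)⁻¹) (r + 1) (n + 1) =
      (r + 1) * ∑ m ∈ range (n + 1), compositionSum (fun a : ℕ => (a : K)⁻¹) r m := by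
  have hunit (m : ℕ) : ((m + 1 : ℕ) : K) * ((m + 1 : ℕ) : K)⁻¹ = 1 :=
    mul_inv_cancel₀ (Nat.cast_ne_zero.mpr m.succ_ne_zero)
  rw [← Nat.cast_succ, natCast_mul_compositionSum_succ, Nat.sum_antidiagonal_succ]
  simp only [Nat.cast_zero, zero_mul, zero_add, hunit, one_mul]
  rw [← Nat.sum_antidiagonal_swap]
  exact congrArg _ (Nat.sum_antidiagonal_eq_sum_range_succ (fun m _ => compositionSum _ r m) n)

theorem sum_range_compositionSum_inv (n r : ℕ) :
    ∑ m ∈ range (n + 1), compositionSum (fun a : ℕ => (a : K)⁻¹) r m =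
      injectiveSum (fun a : ℕ => (a : K)⁻¹) (Icc 1 n) r := by
  induction n generalizing r with
  | zero => simp [compositionSum_zero_right, injectiveSum_empty]
  | succ n ih =>
    rw [sum_range_succ, ih, ← insert_Icc_right_eq_Icc_add_one (Nat.le_add_left 1 n)]
    cases r with
    | zero => simp [compositionSum_zero_succ, injectiveSum_zero]
    | succ r =>
      rw [injectiveSum_insert (by simp)]
      congr 1
      have hrec := succ_mul_compositionSum_inv (K := K) n r
      push_cast
      rw [mul_left_comm, eq_inv_mul_iff_mul_eq₀ (Nat.cast_add_one_ne_zero n), hrec, ih]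

end Harmonic

/-- The refinement of Lubell's identity: the sum of `1/(i₁⋯i_j)` over `j`-tuples of
positive integers with `i₁+⋯+i_j = k` equals the sum of `1/(w₁⋯w_j)` over `j`-tuples of
pairwise distinct elements of `{1,…,k}` whose maximum is exactly `k`. -/
theorem lubell_refinement (k j : ℕ) (hk : 0 < k) (hj : 0 < j) :
    ∑ i ∈ (Finset.Nat.antidiagonalTuple j k).filter (fun i => ∀ s, 0 < i s),
      1 / ∏ s, (i s : ℚ) =
    ∑ w ∈ (Fintype.piFinset fun _ : Fin j => Finset.Icc 1 k).filter
        (fun w => Function.Injective w ∧ ∃ i, w i = k),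
      1 / ∏ i, (w i : ℚ) := by
  obtain ⟨n, rfl⟩ := Nat.exists_eq_add_one.mpr hk
  obtain ⟨r, rfl⟩ := Nat.exists_eq_add_one.mpr hj
  simp only [one_div, ← prod_inv_distrib]
  have hlhs : ∑ i ∈ (Nat.antidiagonalTuple (r + 1) (n + 1)).filter (fun i => ∀ s, 0 < i s),
      ∏ s, ((i s : ℕ) : ℚ)⁻¹ = compositionSum (fun a : ℕ => (a : ℚ)⁻¹) (r + 1) (n + 1) := by
    refine sum_filter_of_ne fun i _ hi s => Nat.pos_of_ne_zero fun h0 => hi ?_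
    exact prod_eq_zero (mem_univ s) (by simp [h0])
  rw [hlhs, ← insert_Icc_right_eq_Icc_add_one (Nat.le_add_left 1 n),
    sum_injective_exists_eq (f := fun a : ℕ => (a : ℚ)⁻¹) (by simp),
    ← sum_range_compositionSum_inv, mul_left_comm, ← succ_mul_compositionSum_inv]
  push_cast
  rw [inv_mul_cancel_left₀ (Nat.cast_add_one_ne_zero n)]
end

section
/- (Taylor's theorem for logarithmic formal series, e^{y·d/dx} f(x) = f(x+y), in coefficient form.) For every f : ℂ × ℂ → W, every k ∈ ℕ and all n, m ∈ ℂ, (D^k f)(n,m) = k! • ∑_{j=0}^{k} ∑_{b=j}^{k} binom(m+j, j) · c_{j,b} · binom(n+k, k−b) • f(n+k, m+j), where c_{j,b} = ∑ (−1)^{b−j}/(i_1 ⋯ i_j) ∈ ℚ, the sum ranging over all j-tuples (i_1,…,i_j) of positive integers with i_1 + ⋯ + i_j = b (so c_{0,0} = 1 and c_{0,b} = 0 for b > 0), and D^k denotes the k-fold iterate of D. The right-hand side is exactly k! times the coefficient of x^n (log x)^m y^k in the substituted series f(x+y) := ∑_{N,M} f(N,M) (x+y)^N (log x + log(1+y/x))^M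 expanded by the binomial expansion convention, with log(1+u) = ∑_{i≥1} ((−1)^{i−1}/i) u^i. -/
/-- The generalized binomial coefficient `binom(z, j) = z(z-1)⋯(z-j+1)/j!` for `z : ℂ`. -/
noncomputable def cchoose (z : ℂ) (j : ℕ) : ℂ :=
  (∏ s ∈ Finset.range j, (z - (s : ℂ))) / (j.factorial : ℂ)

/-- The coefficient `c_{j,b} = ∑_{i₁+⋯+i_j=b, iₛ ≥ 1} (-1)^{b-j}/(i₁⋯i_j) ∈ ℚ`. -/
noncomputable def cjb (j b : ℕ) : ℚ :=
  ∑ i ∈ (Finset.Nat.antidiagonalTuple j b).filter (fun i => ∀ s, 0 < i s),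
    (-1 : ℚ) ^ (b - j) / ∏ s, (i s : ℚ)

/-- The formal derivative `d/dx` on `W{x, log x}`, in coefficient form. -/
def Dop (W : Type*) [AddCommGroup W] [Module ℂ W] (f : ℂ × ℂ → W) : ℂ × ℂ → W :=
  fun p => (p.1 + 1) • f (p.1 + 1, p.2) + (p.2 + 1) • f (p.1 + 1, p.2 + 1)

/-!
With `L = log (1 + X)` and `B_z = (1 + X) ^ z`, the number `c_{j,b}` is the coefficient of `X ^ b`
in `L ^ j` and `binom(z, i)` that of `X ^ i` in `B_z`, so the inner sum over `b` is the coefficient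
`p_k` of `X ^ k` in `P_j = L ^ j * B_z` with `z = n + k`. From `(1 + X) L' = 1` and
`(1 + X) B_z' = z B_z` one gets `(1 + X) P_j' = z P_j + j P_{j-1}`, i.e.
`(k + 1) p_{k+1} = (z - k) p_k + j q_k` for the coefficients `q` of `P_{j-1}`; this is exactly the
recursion that `D^[k+1] = D ∘ D^[k]` imposes on the coefficients of `D^[k] f`.
-/

open PowerSeries Finset

theorem PowerSeries.coeff_pow_eq_sum_antidiagonalTuple_s3 {R : Type*} [CommSemiring R]
    (φ : R⟦X⟧) (j b : ℕ) :
    coeff b (φ ^ j) = ∑ i ∈ Nat.antidiagonalTuple j b, ∏ s, coeff (i s) φ := by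
  rw [← Fin.prod_const, coeff_prod]
  exact sum_equiv Finsupp.equivFunOnFinite (by simp [Nat.mem_antidiagonalTuple]) (fun _ _ => rfl)

theorem cjb_eq_coeff_log_pow (j b : ℕ) : cjb j b = coeff b (log ℚ ^ j) := by
  rw [coeff_pow_eq_sum_antidiagonalTuple_s3, cjb, sum_filter]
  refine sum_congr rfl fun i hi => ?_
  rw [Nat.mem_antidiagonalTuple] at hi
  split_ifs with hpos
  · have hjb : j ≤ b := by
      simpa [← hi] using card_nsmul_le_sum univ i 1 fun s _ => hpos s
    have hsign : (-1 : ℚ) ^ (b - j) = ∏ s, (-1) ^ (i s + 1) := by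
      rw [prod_pow_eq_pow_sum, sum_add_distrib, hi, sum_const, card_univ, Fintype.card_fin,
        smul_eq_mul, mul_one, ← Nat.sub_add_cancel hjb, add_assoc, ← two_mul, pow_add, pow_mul]
      simp
    simp [hsign, prod_div_distrib, (hpos _).ne']
  · obtain ⟨s, hs⟩ := not_forall.mp hpos
    exact (prod_eq_zero (mem_univ s) (by simp [Nat.eq_zero_of_not_pos hs])).symm

theorem algebraMap_cjb {A : Type*} [CommRing A] [Algebra ℚ A] (j b : ℕ) :
    algebraMap ℚ A (cjb j b) = coeff b (log A ^ j) := by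
  rw [cjb_eq_coeff_log_pow, ← coeff_map, map_pow, map_log]

theorem PowerSeries.coeff_log_pow_of_lt {A : Type*} [CommRing A] [Algebra ℚ A] {j b : ℕ}
    (h : b < j) : coeff b (log A ^ j) = 0 := by
  obtain ⟨φ, hφ⟩ : X ∣ log A := X_dvd_iff.mpr constantCoeff_log
  rw [hφ, mul_pow, coeff_X_pow_mul', if_neg (not_le.mpr h)]

theorem PowerSeries.coeff_one_add_X_mul_derivative {R : Type*} [CommSemiring R] (φ : R⟦X⟧)
    (k : ℕ) : coeff k ((1 + X) * d⁄dX R φ) = (k + 1) * coeff (k + 1) φ + k * coeff k φ := by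
  rw [add_mul, one_mul, map_add, coeff_derivative]
  rcases k with _ | k
  · simp [mul_comm]
  · simp [coeff_succ_X_mul, coeff_derivative, mul_comm]

theorem PowerSeries.one_add_X_mul_derivative_log {A : Type*} [CommRing A] [Algebra ℚ A] :
    (1 + X) * d⁄dX A (log A) = 1 := by
  ext k
  rw [deriv_log]
  rcases k with _ | k
  · simp
  · rw [add_mul, one_mul, map_add, coeff_succ_X_mul, coeff_mk, coeff_mk, ← map_add, pow_succ]
    simp

/-- The binomial series `(1 + X) ^ z`. -/
noncomputable def cchooseSeries (z : ℂ) : ℂ⟦X⟧ :=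
  mk (cchoose z)

theorem succ_mul_cchoose_succ (z : ℂ) (a : ℕ) :
    (a + 1) * cchoose z (a + 1) = (z - a) * cchoose z a := by
  have ha : (a : ℂ) + 1 ≠ 0 := Nat.cast_add_one_ne_zero a
  rw [cchoose, cchoose, prod_range_succ, Nat.factorial_succ]
  push_cast
  field_simp

theorem one_add_X_mul_derivative_cchooseSeries (z : ℂ) :
    (1 + X) * d⁄dX ℂ (cchooseSeries z) = C z * cchooseSeries z := by
  ext k
  rw [coeff_one_add_X_mul_derivative, coeff_C_mul, cchooseSeries, coeff_mk, coeff_mk,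
    succ_mul_cchoose_succ]
  ring

theorem one_add_X_mul_derivative_log_pow_mul_cchooseSeries (z : ℂ) (j : ℕ) :
    (1 + X) * d⁄dX ℂ (log ℂ ^ j * cchooseSeries z) =
      C z * (log ℂ ^ j * cchooseSeries z) + C (j : ℂ) * (log ℂ ^ (j - 1) * cchooseSeries z) := by
  rw [Derivation.leibniz, Derivation.leibniz_pow, smul_eq_mul, smul_eq_mul, nsmul_eq_mul,
    smul_eq_mul, map_natCast]
  linear_combination log ℂ ^ j * one_add_X_mul_derivative_cchooseSeries z +
    (j * cchooseSeries z * log ℂ ^ (j - 1)) * one_add_X_mul_derivative_log (A := ℂ)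

theorem succ_mul_coeff_succ_log_pow_mul_cchooseSeries (z : ℂ) (j k : ℕ) :
    (k + 1) * coeff (k + 1) (log ℂ ^ j * cchooseSeries z) =
      (z - k) * coeff k (log ℂ ^ j * cchooseSeries z) +
        j * coeff k (log ℂ ^ (j - 1) * cchooseSeries z) := by
  have h := congrArg (coeff k) (one_add_X_mul_derivative_log_pow_mul_cchooseSeries z j)
  rw [coeff_one_add_X_mul_derivative, map_add, coeff_C_mul, coeff_C_mul] at h
  linear_combination h

theorem coeff_log_pow_mul_cchooseSeries (z : ℂ) (j k : ℕ) :
    coeff k (log ℂ ^ j * cchooseSeries z) = ∑ b ∈ Icc j k, (cjb j b : ℂ) * cchoose z (k - b) := by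
  rw [coeff_mul, Nat.sum_antidiagonal_eq_sum_range_succ
    (fun b c => coeff b (log ℂ ^ j) * coeff c (cchooseSeries z))]
  have hsub : Icc j k ⊆ range (k + 1) := fun b hb => by
    simp only [mem_Icc, mem_range] at hb ⊢
    omega
  rw [← sum_subset hsub fun b hbk hbj => ?_]
  · refine sum_congr rfl fun b _ => ?_
    rw [← algebraMap_cjb, eq_ratCast, cchooseSeries, coeff_mk]
  · simp only [mem_Icc, mem_range, not_and_or, not_le] at hbk hbj
    rw [coeff_log_pow_of_lt (A := ℂ) (by omega), zero_mul]

theorem add_one_smul_sum_cchoose_add_one {W : Type*} [AddCommGroup W] [Module ℂ W] (m : ℂ)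
    (a : ℕ → ℂ) (g : ℂ → W) (k : ℕ) :
    (m + 1) • ∑ j ∈ range k, (cchoose (m + 1 + j) j * a j) • g (m + 1 + j) =
      ∑ j ∈ range (k + 1), (j * cchoose (m + j) j * a (j - 1)) • g (m + j) := by
  rw [sum_range_succ', smul_sum]
  simp only [Nat.cast_zero, zero_mul, zero_smul, add_zero, Nat.add_sub_cancel]
  refine sum_congr rfl fun j _ => ?_
  have hm : m + ((j + 1 : ℕ) : ℂ) = m + 1 + j := by push_cast; ring
  have hbin := succ_mul_cchoose_succ (m + 1 + j) j
  rw [smul_smul, hm]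
  congr 1
  push_cast
  linear_combination (-a j) * hbin

theorem iterate_succ_Dop_apply (W : Type*) [AddCommGroup W] [Module ℂ W] (f : ℂ × ℂ → W) (k : ℕ)
    (n m : ℂ) :
    (Dop W)^[k + 1] f (n, m) =
      (n + 1) • (Dop W)^[k] f (n + 1, m) + (m + 1) • (Dop W)^[k] f (n + 1, m + 1) :=
  Function.iterate_succ_apply' (Dop W) k f ▸ rfl

theorem iterate_Dop_apply (W : Type*) [AddCommGroup W] [Module ℂ W] (f : ℂ × ℂ → W) (k : ℕ)
    (n m : ℂ) :
    (Dop W)^[k] f (n, m) = (k.factorial : ℂ) • ∑ j ∈ range (k + 1),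
      (cchoose (m + j) j * coeff k (log ℂ ^ j * cchooseSeries (n + k))) • f (n + k, m + j) := by
  induction k generalizing n m with
  | zero => simp [cchoose, cchooseSeries]
  | succ k ih =>
    have hN : n + ((k + 1 : ℕ) : ℂ) = n + 1 + k := by push_cast; ring
    rw [iterate_succ_Dop_apply, ih, ih, hN, Nat.factorial_succ, Nat.cast_mul, mul_comm, mul_smul,
      smul_comm (n + 1), smul_comm (m + 1), ← smul_add]
    congr 1
    obtain ⟨c, hc⟩ : ∃ c : ℕ → ℕ → ℂ,
        ∀ i j, coeff i (log ℂ ^ j * cchooseSeries (n + 1 + k)) = c i j :=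
      ⟨_, fun _ _ => rfl⟩
    have hc_top : c k (k + 1) = 0 := by simp [← hc, coeff_log_pow_mul_cchooseSeries]
    have hc_rec (j : ℕ) : (k + 1) * c (k + 1) j = (n + 1) * c k j + j * c k (j - 1) := by
      simp only [← hc, succ_mul_coeff_succ_log_pow_mul_cchooseSeries]
      ring
    simp only [hc]
    rw [add_one_smul_sum_cchoose_add_one m (c k) (fun x => f (n + 1 + k, x)),
      sum_range_succ _ (k + 1), sum_range_succ _ (k + 1), smul_add, ← add_assoc]
    congr 1
    · simp only [smul_sum, ← sum_add_distrib]
      refine sum_congr rfl fun j _ => ?_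
      rw [smul_smul, smul_smul, ← add_smul]
      congr 1
      push_cast
      linear_combination (-cchoose (m + j) j) * hc_rec j
    · have h := hc_rec (k + 1)
      rw [Nat.add_sub_cancel, hc_top] at h
      rw [smul_smul, Nat.add_sub_cancel]
      congr 1
      push_cast at h ⊢
      linear_combination (-cchoose (m + (k + 1)) (k + 1)) * h

/-- Taylor's theorem for logarithmic formal series, `e^{y d/dx} f(x) = f(x+y)`, in
coefficient form: `(D^k f)(n,m)` equals `k!` times the coefficient of
`xⁿ (log x)ᵐ yᵏ` in the expansion of `f(x+y)`. -/
theorem log_taylor_theorem (W : Type*) [AddCommGroup W] [Module ℂ W]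
    (f : ℂ × ℂ → W) (k : ℕ) (n m : ℂ) :
    (Dop W)^[k] f (n, m) =
      k.factorial •
        ∑ j ∈ Finset.range (k + 1), ∑ b ∈ Finset.Icc j k,
          (cchoose (m + (j : ℂ)) j * ((cjb j b : ℚ) : ℂ) * cchoose (n + (k : ℂ)) (k - b)) •
            f (n + (k : ℂ), m + (j : ℂ)) := by
  rw [iterate_Dop_apply, Nat.cast_smul_eq_nsmul]
  congr 1
  refine sum_congr rfl fun j _ => ?_
  rw [coeff_log_pow_mul_cchooseSeries, mul_sum, sum_smul]
  simp only [mul_assoc]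
end

section
/- (The identity e^{y·x·d/dx} f(x) = f(x e^y) in coefficient form.) Let E be the linear operator on functions f : ℂ × ℂ → W defined by (E f)(n,m) = n•f(n,m) + (m+1)•f(n,m+1) (the formal operator x·d/dx). Then for every f : ℂ × ℂ → W, every k ∈ ℕ and all n, m ∈ ℂ, (E^k f)(n,m) = ∑_{b=0}^{k} (k!/(k−b)!) · n^{k−b} · binom(m+b, b) • f(n, m+b), where E^k denotes the k-fold iterate of E. The right-hand side is exactly k! times the coefficient of x^n (log x)^m y^k in f(x e^y) := ∑_{N,M} f(N,M) x^N e^{Ny} (log x + y)^M. -/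
/-- The formal operator `x·d/dx` on `W{x, log x}`, in coefficient form. -/
def Eop (W : Type*) [AddCommGroup W] [Module ℂ W] (f : ℂ × ℂ → W) : ℂ × ℂ → W :=
  fun p => p.1 • f p + (p.2 + 1) • f (p.1, p.2 + 1)

/-- Coefficient in the expansion, with `descFactorial` (which vanishes for `b > k`). -/
noncomputable def ccoef (k b : ℕ) (n m : ℂ) : ℂ :=
  (k.descFactorial b : ℂ) * n ^ (k - b) * cchoose (m + (b : ℂ)) b

lemma descFactorial_rec (k b : ℕ) :
    (k + 1).descFactorial (b + 1) = k.descFactorial (b + 1) + (b + 1) * k.descFactorial b := by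
  rcases le_or_gt b k with h | h
  · rw [Nat.succ_descFactorial_succ, Nat.descFactorial_succ]
    have : k + 1 = (k - b) + (b + 1) := by omega
    rw [this, Nat.add_mul]
  · have h1 : k.descFactorial b = 0 := Nat.descFactorial_eq_zero_iff_lt.mpr h
    have h2 : k.descFactorial (b + 1) = 0 := Nat.descFactorial_eq_zero_iff_lt.mpr (by omega)
    have h3 : (k + 1).descFactorial (b + 1) = 0 := Nat.descFactorial_eq_zero_iff_lt.mpr (by omega)
    rw [h1, h2, h3]
    ring

lemma cchoose_rec (m : ℂ) (b : ℕ) :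
    ((b : ℂ) + 1) * cchoose (m + (b : ℂ) + 1) (b + 1) = (m + (b : ℂ) + 1) * cchoose (m + (b : ℂ)) b := by
  have hprod : (∏ s ∈ Finset.range (b + 1), (m + (b : ℂ) + 1 - (s : ℂ)))
      = (∏ s ∈ Finset.range b, (m + (b : ℂ) - (s : ℂ))) * (m + (b : ℂ) + 1) := by
    rw [Finset.prod_range_succ']
    congr 1
    · apply Finset.prod_congr rfl
      intro s _
      push_cast
      ring
    · norm_num
  have hb : ((b : ℂ) + 1) ≠ 0 := by
    have h := Nat.cast_ne_zero (R := ℂ).mpr (Nat.succ_ne_zero b)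
    push_cast at h
    exact h
  have hfb : ((b.factorial : ℂ)) ≠ 0 := Nat.cast_ne_zero.mpr b.factorial_ne_zero
  unfold cchoose
  rw [hprod, Nat.factorial_succ]
  push_cast
  field_simp

lemma ccoef_rec (k b : ℕ) (n m : ℂ) :
    ccoef (k + 1) (b + 1) n m = n * ccoef k (b + 1) n m + ccoef k b n m * (m + (b : ℂ) + 1) := by
  unfold ccoef
  rw [descFactorial_rec]
  push_cast
  have key : ((k.descFactorial b : ℂ)) * n ^ (k - b) * (((b : ℂ) + 1) * cchoose (m + (b : ℂ) + 1) (b + 1))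
      = ((k.descFactorial b : ℂ)) * n ^ (k - b) * ((m + (b : ℂ) + 1) * cchoose (m + (b : ℂ)) b) := by
    rw [cchoose_rec]
  rcases lt_or_ge b k with h | h
  · have hpow : k - b = (k - (b + 1)) + 1 := by omega
    have hc : ((b : ℂ) + 1 : ℂ) = (((b : ℕ) + 1 : ℕ) : ℂ) := by push_cast; ring
    calc ((k.descFactorial (b + 1) : ℂ) + ((b : ℂ) + 1) * (k.descFactorial b : ℂ)) * n ^ (k - b) *
          cchoose (m + ((b : ℂ) + 1)) (b + 1)
        = (k.descFactorial (b + 1) : ℂ) * n ^ (k - b) * cchoose (m + ((b : ℂ) + 1)) (b + 1)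
          + (k.descFactorial b : ℂ) * n ^ (k - b) * (((b : ℂ) + 1) * cchoose (m + (b : ℂ) + 1) (b + 1)) := by
          rw [show m + ((b : ℂ) + 1) = m + (b : ℂ) + 1 by ring]; ring
      _ = (k.descFactorial (b + 1) : ℂ) * n ^ (k - b) * cchoose (m + ((b : ℂ) + 1)) (b + 1)
          + (k.descFactorial b : ℂ) * n ^ (k - b) * ((m + (b : ℂ) + 1) * cchoose (m + (b : ℂ)) b) := by
          rw [key]
      _ = n * ((k.descFactorial (b + 1) : ℂ) * n ^ (k - (b + 1)) * cchoose (m + ((b : ℂ) + 1)) (b + 1))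
          + (k.descFactorial b : ℂ) * n ^ (k - b) * cchoose (m + (b : ℂ)) b * (m + (b : ℂ) + 1) := by
          rw [hpow, pow_succ]; ring
  · have h1 : k.descFactorial (b + 1) = 0 := Nat.descFactorial_eq_zero_iff_lt.mpr (by omega)
    rw [h1]
    push_cast
    rw [show m + ((b : ℂ) + 1) = m + (b : ℂ) + 1 by ring]
    calc (0 + ((b : ℂ) + 1) * (k.descFactorial b : ℂ)) * n ^ (k - b) * cchoose (m + (b : ℂ) + 1) (b + 1)
        = (k.descFactorial b : ℂ) * n ^ (k - b) * (((b : ℂ) + 1) * cchoose (m + (b : ℂ) + 1) (b + 1)) := by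
          ring
      _ = (k.descFactorial b : ℂ) * n ^ (k - b) * ((m + (b : ℂ) + 1) * cchoose (m + (b : ℂ)) b) := key
      _ = n * (0 * n ^ (k - (b + 1)) * cchoose (m + (b : ℂ) + 1) (b + 1))
          + (k.descFactorial b : ℂ) * n ^ (k - b) * cchoose (m + (b : ℂ)) b * (m + (b : ℂ) + 1) := by
          ring

lemma aux_expand (W : Type*) [AddCommGroup W] [Module ℂ W]
    (f : ℂ × ℂ → W) (k : ℕ) (n m : ℂ) :
    (Eop W)^[k] f (n, m) =
      ∑ b ∈ Finset.range (k + 1), ccoef k b n m • f (n, m + (b : ℂ)) := by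
  induction k generalizing f with
  | zero => simp [ccoef, cchoose]
  | succ k ih =>
    rw [Function.iterate_succ_apply, ih]
    have hterm : ∀ b ∈ Finset.range (k + 1),
        ccoef k b n m • (Eop W f) (n, m + (b : ℂ))
        = (ccoef k b n m * n) • f (n, m + (b : ℂ))
          + (ccoef k b n m * (m + (b : ℂ) + 1)) • f (n, m + (b : ℂ) + 1) := by
      intro b _
      simp only [Eop]
      rw [smul_add, smul_smul, smul_smul]
    rw [Finset.sum_congr rfl hterm, Finset.sum_add_distrib]
    -- extend first sum to range (k+2)
    have hfirst : ∑ b ∈ Finset.range (k + 1), (ccoef k b n m * n) • f (n, m + (b : ℂ))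
        = ∑ b ∈ Finset.range (k + 2), (ccoef k b n m * n) • f (n, m + (b : ℂ)) := by
      rw [Finset.sum_range_succ (n := k + 1)]
      have : ccoef k (k + 1) n m = 0 := by
        unfold ccoef
        rw [Nat.descFactorial_eq_zero_iff_lt.mpr (by omega)]
        simp
      rw [this]
      simp
    rw [hfirst]
    rw [Finset.sum_range_succ' (fun b => (ccoef k b n m * n) • f (n, m + (b : ℂ))) (k + 1)]
    rw [Finset.sum_range_succ' (fun b => ccoef (k + 1) b n m • f (n, m + (b : ℂ))) (k + 1)]
    rw [add_assoc, add_comm (((ccoef k 0 n m * n) • f (n, m + ((0 : ℕ) : ℂ))))]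
    rw [← add_assoc, ← Finset.sum_add_distrib]
    congr 1
    · apply Finset.sum_congr rfl
      intro b _
      simp only [Nat.cast_add, Nat.cast_one, ← add_assoc]
      rw [← add_smul]
      congr 1
      have := ccoef_rec k b n m
      rw [this]
      ring
    · congr 1
      unfold ccoef
      simp [cchoose]
      ring

/-- The identity `e^{y x d/dx} f(x) = f(x eʸ)`, in coefficient form: `(E^k f)(n,m)` equals
`k!` times the coefficient of `xⁿ (log x)ᵐ yᵏ` in `f(x eʸ)`. -/
theorem log_xe_y_theorem (W : Type*) [AddCommGroup W] [Module ℂ W]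
    (f : ℂ × ℂ → W) (k : ℕ) (n m : ℂ) :
    (Eop W)^[k] f (n, m) =
      ∑ b ∈ Finset.range (k + 1),
        (((k.factorial / (k - b).factorial : ℕ) : ℂ) * n ^ (k - b) *
          cchoose (m + (b : ℂ)) b) • f (n, m + (b : ℂ)) := by
  rw [aux_expand]
  apply Finset.sum_congr rfl
  intro b hb
  have hbk : b ≤ k := by
    have := Finset.mem_range.mp hb; omega
  rw [ccoef, Nat.descFactorial_eq_div hbk]
end

section
/- Let n, m ∈ ℂ and w ∈ W, and let δ : ℂ × ℂ → W be the monomial series x^n (log x)^m w, i.e. δ(n,m) = w and δ(p,q) = 0 for (p,q) ≠ (n,m). Then for every k ∈ ℕ: (i) for each j with 0 ≤ j ≤ k, (D^k δ)(n−k, m−j) = (∏_{s=0}^{j−1} (m−s)) · (∑_T ∏_{t∈T} (n−t)) • w, where T ranges over all subsets of {0, 1, …, k−1} of cardinality k−j (the inner sum being 1 when j = k); and (ii) (D^k δ)(p,q) = 0 for every (p,q) ∈ ℂ × ℂ not of the form (n−k, m−j) with 0 ≤ j ≤ k. (This is the formula (d/dx)^k x^n (log x)^m = ∑_{j=0}^k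 m(m−1)⋯(m−j+1) (∑_{0≤t_1<⋯<t_{k−j}<k} (n−t_1)⋯(n−t_{k−j})) x^{n−k} (log x)^{m−j}.) -/
/-- Recursion for elementary symmetric sums over `range (k+1)`. -/
lemma esymm_range_succ (n : ℂ) (k j : ℕ) (hj : j ≤ k) :
    ∑ T ∈ Finset.powersetCard (k + 1 - j) (Finset.range (k + 1)), ∏ t ∈ T, (n - (t : ℂ))
    = (n - (k : ℂ)) *
        (∑ T ∈ Finset.powersetCard (k - j) (Finset.range k), ∏ t ∈ T, (n - (t : ℂ)))
      + ∑ T ∈ Finset.powersetCard (k + 1 - j) (Finset.range k), ∏ t ∈ T, (n - (t : ℂ)) := by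
  have hk : k ∉ Finset.range k := by simp
  have h1 : k + 1 - j = (k - j) + 1 := by omega
  rw [Finset.range_add_one, h1, Finset.powersetCard_succ_insert hk, Finset.sum_union, Finset.sum_image]
  · have hins : ∀ T ∈ Finset.powersetCard (k - j) (Finset.range k),
        ∏ t ∈ insert k T, (n - (t : ℂ)) = (n - (k : ℂ)) * ∏ t ∈ T, (n - (t : ℂ)) := by
      intro T hT
      have hkT : k ∉ T := fun h => hk ((Finset.mem_powersetCard.1 hT).1 h)
      rw [Finset.prod_insert hkT]
    rw [Finset.sum_congr rfl hins, ← Finset.mul_sum]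
    ring
  · intro T hT S hS hTS
    have hkT : k ∉ T := fun h => hk ((Finset.mem_powersetCard.1 hT).1 h)
    have hkS : k ∉ S := fun h => hk ((Finset.mem_powersetCard.1 hS).1 h)
    have := congrArg (Finset.erase · k) hTS
    simpa [Finset.erase_insert, hkT, hkS] using this
  · rw [Finset.disjoint_left]
    intro T hT hT'
    have hkT : k ∉ T := fun h => hk ((Finset.mem_powersetCard.1 hT).1 h)
    obtain ⟨S, _, rfl⟩ := Finset.mem_image.1 hT'
    exact hkT (Finset.mem_insert_self k S)

/-- The formula
`(d/dx)^k xⁿ (log x)ᵐ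
  = ∑_{j=0}^k m(m-1)⋯(m-j+1) (∑_{0≤t₁<⋯<t_{k-j}<k} (n-t₁)⋯(n-t_{k-j})) x^{n-k} (log x)^{m-j}`. -/
theorem iterated_derivative_of_monomial (W : Type*) [AddCommGroup W] [Module ℂ W]
    (n m : ℂ) (w : W) (δ : ℂ × ℂ → W)
    (hδ1 : δ (n, m) = w) (hδ2 : ∀ p : ℂ × ℂ, p ≠ (n, m) → δ p = 0) (k : ℕ) :
    (∀ j ≤ k, (Dop W)^[k] δ (n - (k : ℂ), m - (j : ℂ)) =
      ((∏ s ∈ Finset.range j, (m - (s : ℂ))) *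
        ∑ T ∈ Finset.powersetCard (k - j) (Finset.range k), ∏ t ∈ T, (n - (t : ℂ))) • w) ∧
    (∀ p q : ℂ, (∀ j ≤ k, (p, q) ≠ (n - (k : ℂ), m - (j : ℂ))) →
      (Dop W)^[k] δ (p, q) = 0) := by
  induction k with
  | zero =>
    constructor
    · intro j hj
      interval_cases j
      simpa using hδ1
    · intro p q hpq
      have := hpq 0 le_rfl
      apply hδ2
      simpa using this
  | succ k ih =>
    obtain ⟨ih1, ih2⟩ := ih
    have hD : ∀ p q : ℂ, (Dop W)^[k + 1] δ (p, q)
        = (p + 1) • (Dop W)^[k] δ (p + 1, q) + (q + 1) • (Dop W)^[k] δ (p + 1, q + 1) := by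
      intro p q
      rw [Function.iterate_succ_apply']
      rfl
    have e1 : n - ((k + 1 : ℕ) : ℂ) + 1 = n - (k : ℂ) := by push_cast; ring
    constructor
    · intro j hj
      rcases Nat.eq_or_lt_of_le hj with hjk | hjk
      · -- j = k + 1
        subst hjk
        rw [hD, e1]
        have h1 : (Dop W)^[k] δ (n - (k : ℂ), m - ((k + 1 : ℕ) : ℂ)) = 0 := by
          apply ih2
          intro j' hj' h
          rw [Prod.mk.injEq] at h
          have h2 := h.2
          have : ((j' : ℕ) : ℂ) = ((k + 1 : ℕ) : ℂ) := by push_cast at h2 ⊢; linear_combination h2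
          have := Nat.cast_injective (R := ℂ) this
          omega
        have h2 : m - ((k + 1 : ℕ) : ℂ) + 1 = m - (k : ℂ) := by push_cast; ring
        rw [h1, h2, ih1 k le_rfl, smul_zero, zero_add, smul_smul]
        congr 1
        rw [Nat.sub_self, Nat.sub_self]
        have hE0 : ∀ l : ℕ,
            ∑ T ∈ Finset.powersetCard 0 (Finset.range l), ∏ t ∈ T, (n - (t : ℂ)) = 1 := by
          intro l; simp
        rw [hE0 k, hE0 (k + 1), Finset.prod_range_succ]
        ring
      · -- j ≤ k
        have hjk' : j ≤ k := Nat.lt_succ_iff.mp hjk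
        match j, hjk' with
        | 0, _ =>
          rw [hD, e1]
          have hz : (Dop W)^[k] δ (n - (k : ℂ), m - ((0 : ℕ) : ℂ) + 1) = 0 := by
            apply ih2
            intro j' hj' h
            rw [Prod.mk.injEq] at h
            have h2 := h.2
            have : ((j' + 1 : ℕ) : ℂ) = 0 := by push_cast at h2 ⊢; linear_combination h2
            exact Nat.cast_ne_zero.2 (Nat.succ_ne_zero j') this
          rw [hz, smul_zero, add_zero, ih1 0 (Nat.zero_le k), smul_smul]
          congr 1
          have hemp : Finset.powersetCard (k + 1) (Finset.range k) = ∅ := by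
            rw [show k + 1 = (Finset.range k).card + 1 by simp]
            exact Finset.powersetCard_card_add _ one_pos
          have hE := esymm_range_succ n k 0 (Nat.zero_le k)
          simp only [Nat.sub_zero] at hE ⊢
          rw [hE, hemp]
          simp
        | (j' + 1), hk1 =>
          rw [hD, e1]
          have e2 : m - ((j' + 1 : ℕ) : ℂ) + 1 = m - (j' : ℂ) := by push_cast; ring
          rw [e2, ih1 (j' + 1) hk1, ih1 j' (Nat.le_of_succ_le hk1), smul_smul, smul_smul,
            ← add_smul]
          congr 1
          have hsub : k + 1 - (j' + 1) = k - j' := by omega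
          rw [hsub]
          have hE := esymm_range_succ n k (j' + 1) hk1
          rw [hsub] at hE
          rw [hE, Finset.prod_range_succ]
          ring
    · intro p q hpq
      rw [hD]
      by_cases hp : p + 1 = n - (k : ℂ)
      · have hpk : p = n - ((k + 1 : ℕ) : ℂ) := by push_cast; linear_combination hp
        have h1 : (Dop W)^[k] δ (p + 1, q) = 0 := by
          apply ih2
          intro j hj h
          rw [Prod.mk.injEq] at h
          exact hpq j (le_trans hj (Nat.le_succ k)) (by rw [Prod.mk.injEq]; exact ⟨hpk, h.2⟩)
        have h2 : (Dop W)^[k] δ (p + 1, q + 1) = 0 := by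
          apply ih2
          intro j hj h
          rw [Prod.mk.injEq] at h
          refine hpq (j + 1) (by omega) ?_
          rw [Prod.mk.injEq]
          refine ⟨hpk, ?_⟩
          push_cast
          linear_combination h.2
        rw [h1, h2, smul_zero, smul_zero, add_zero]
      · have h1 : (Dop W)^[k] δ (p + 1, q) = 0 := by
          apply ih2
          intro j hj h
          exact hp (Prod.mk.injEq _ _ _ _ ▸ h).1
        have h2 : (Dop W)^[k] δ (p + 1, q + 1) = 0 := by
          apply ih2
          intro j hj h
          exact hp (Prod.mk.injEq _ _ _ _ ▸ h).1
        rw [h1, h2, smul_zero, smul_zero, add_zero]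
end

section
/- Let m be a positive integer and let f ∈ W[log x]{x} satisfy the formal differential equation (x·d/dx − a)^m f = 0, i.e. the m-fold iterate L^m f is identically 0. Then f lies in W x^a ⊕ W x^a log x ⊕ ⋯ ⊕ W x^a (log x)^{m−1}; that is, f(n)(k) = 0 whenever n ≠ a or k ≥ m. -/
/-- The operator `x·(d/dx) − a` on `W[log x]{x}`, in coefficient form. -/
def Lop (W : Type*) [AddCommGroup W] [Module ℂ W] (a : ℂ) (f : ℂ → ℕ → W) : ℂ → ℕ → W :=
  fun n k => (n - a) • f n k + ((k : ℂ) + 1) • f n (k + 1)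

private def Tc {W : Type*} [AddCommGroup W] [Module ℂ W] (c : ℂ) (g : ℕ → W) : ℕ → W :=
  fun k => c • g k + ((k : ℂ) + 1) • g (k + 1)

private lemma iterate_Lop_eq {W : Type*} [AddCommGroup W] [Module ℂ W] (a : ℂ) :
    ∀ (m : ℕ) (f : ℂ → ℕ → W) (n : ℂ), (Lop W a)^[m] f n = (Tc (n - a))^[m] (f n) := by
  intro m
  induction m with
  | zero => intros; rfl
  | succ m ih =>
    intro f n
    rw [Function.iterate_succ_apply', Function.iterate_succ_apply']
    funext k
    simp only [Lop, Tc, ih f n]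

private lemma Tc_zero_case {W : Type*} [AddCommGroup W] [Module ℂ W] :
    ∀ (m : ℕ) (g : ℕ → W), (Tc (0 : ℂ))^[m] g = 0 → ∀ k, m ≤ k → g k = 0 := by
  intro m
  induction m with
  | zero => intro g hg k _; exact congrFun hg k
  | succ m ih =>
    intro g hg k hk
    rw [Function.iterate_succ_apply] at hg
    obtain ⟨j, rfl⟩ := Nat.exists_eq_succ_of_ne_zero (by omega : k ≠ 0)
    have h1 : Tc (0 : ℂ) g j = 0 := ih (Tc 0 g) hg j (by omega)
    have h2 : ((j : ℂ) + 1) • g (j + 1) = 0 := by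
      simpa [Tc] using h1
    have hj : ((j : ℂ) + 1) ≠ 0 := by exact_mod_cast Nat.succ_ne_zero j
    exact (smul_eq_zero.mp h2).resolve_left hj

private lemma Tc_one_step {W : Type*} [AddCommGroup W] [Module ℂ W] {c : ℂ} (hc : c ≠ 0)
    (g : ℕ → W) (hfin : {k : ℕ | g k ≠ 0}.Finite) (hg : Tc c g = 0) : g = 0 := by
  obtain ⟨N, hN⟩ := hfin.bddAbove
  have hbig : ∀ k, N + 1 ≤ k → g k = 0 := by
    intro k hk
    by_contra h
    exact absurd (hN h) (by omega)
  have key : ∀ k, g (k + 1) = 0 → g k = 0 := by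
    intro k hk1
    have h1 : c • g k + ((k : ℂ) + 1) • g (k + 1) = 0 := congrFun hg k
    rw [hk1, smul_zero, add_zero] at h1
    exact (smul_eq_zero.mp h1).resolve_left hc
  have claim : ∀ j k, N + 1 ≤ k + j → g k = 0 := by
    intro j
    induction j with
    | zero => intro k hk; exact hbig k (by omega)
    | succ j ih =>
      intro k hk
      rcases le_or_gt (N + 1) k with h | h
      · exact hbig k h
      · exact key k (ih (k + 1) (by omega))
  funext k
  exact claim (N + 1) k (by omega)

private lemma Tc_ne_case {W : Type*} [AddCommGroup W] [Module ℂ W] {c : ℂ} (hc : c ≠ 0) :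
    ∀ (m : ℕ) (g : ℕ → W), {k : ℕ | g k ≠ 0}.Finite → (Tc c)^[m] g = 0 → g = 0 := by
  intro m
  induction m with
  | zero => intro g _ hg; exact hg
  | succ m ih =>
    intro g hfin hg
    rw [Function.iterate_succ_apply] at hg
    have hfin' : {k : ℕ | Tc c g k ≠ 0}.Finite := by
      apply Set.Finite.subset (hfin.union (hfin.preimage (f := fun k => k + 1)
        (Function.Injective.injOn (fun x y h => by omega))))
      intro k hk
      by_contra h
      simp only [Set.mem_union, Set.mem_setOf_eq, Set.mem_preimage] at h
      push_neg at h
      apply hk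
      simp [Tc, h.1, h.2]
    exact Tc_one_step hc g hfin (ih (Tc c g) hfin' hg)

/-- If `f ∈ W[log x]{x}` satisfies `(x d/dx − a)^m f = 0`, then
`f ∈ W xᵃ ⊕ W xᵃ log x ⊕ ⋯ ⊕ W xᵃ (log x)^{m-1}`. -/
theorem solutions_of_formal_ode (W : Type*) [AddCommGroup W] [Module ℂ W]
    (a : ℂ) (m : ℕ) (hm : 0 < m) (f : ℂ → ℕ → W)
    (hf : ∀ n : ℂ, {k : ℕ | f n k ≠ 0}.Finite)
    (hL : (Lop W a)^[m] f = 0) :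
    ∀ (n : ℂ) (k : ℕ), (n ≠ a ∨ m ≤ k) → f n k = 0 := by
  intro n k h
  have hLn : (Tc (n - a))^[m] (f n) = 0 := by
    rw [← iterate_Lop_eq, hL]; rfl
  by_cases hn : n = a
  · subst hn
    have hmk : m ≤ k := h.resolve_left (by simp)
    rw [sub_self] at hLn
    exact Tc_zero_case m (f n) hLn k hmk
  · have := Tc_ne_case (sub_ne_zero.mpr hn) m (f n) (hf n) hLn
    exact congrFun this k
end

section
/- Let m be a positive integer and let f ∈ W[log x]{x} satisfy L^m f = 0 but L^{m−1} f ≠ 0 (so m is the smallest positive integer with (x·d/dx − a)^m f = 0). Then the coefficient of x^a (log x)^{m−1} in f is nonzero: f(a)(m−1) ≠ 0. -/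
section aux
variable {W : Type*} [AddCommGroup W] [Module ℂ W]

/-- Column version of `Lop`. -/
def Tcol (lam : ℂ) (c : ℕ → W) : ℕ → W :=
  fun k => lam • c k + ((k : ℂ) + 1) • c (k + 1)

lemma Lop_iter_col (a : ℂ) (j : ℕ) (f : ℂ → ℕ → W) (n : ℂ) :
    ((Lop W a)^[j] f) n = (Tcol (n - a))^[j] (f n) := by
  induction j generalizing f with
  | zero => rfl
  | succ j ih =>
    rw [Function.iterate_succ_apply, Function.iterate_succ_apply, ih (Lop W a f)]
    rfl

lemma Tcol_finsupp (lam : ℂ) (c : ℕ → W) (h : {k : ℕ | c k ≠ 0}.Finite) :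
    {k : ℕ | Tcol lam c k ≠ 0}.Finite := by
  apply (h.union (h.preimage (Set.injOn_of_injective (add_left_injective 1)))).subset
  intro k hk
  by_contra hmem
  simp only [Set.mem_union, Set.mem_preimage, Set.mem_setOf_eq, not_or, not_not] at hmem
  simp only [Set.mem_setOf_eq, Tcol, hmem.1, hmem.2, smul_zero, add_zero, ne_eq,
    not_true_eq_false] at hk

lemma Tcol_inj (lam : ℂ) (hlam : lam ≠ 0) (c : ℕ → W) (h : {k : ℕ | c k ≠ 0}.Finite)
    (hT : Tcol lam c = 0) : c = 0 := by
  by_contra hc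
  have hne : h.toFinset.Nonempty := by
    rw [Set.Finite.toFinset_nonempty]
    rcases Function.ne_iff.mp hc with ⟨k, hk⟩
    exact ⟨k, hk⟩
  set K := h.toFinset.max' hne with hK
  have hcK : c K ≠ 0 := by
    have := h.toFinset.max'_mem hne
    rw [Set.Finite.mem_toFinset] at this
    exact this
  have hcK1 : c (K + 1) = 0 := by
    by_contra hne1
    have : K + 1 ∈ h.toFinset := by rw [Set.Finite.mem_toFinset]; exact hne1
    have := h.toFinset.le_max' _ this
    omega
  have := congrFun hT K
  simp only [Tcol, hcK1, smul_zero, add_zero, Pi.zero_apply, smul_eq_zero] at this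
  tauto

lemma Tcol_iter_inj (lam : ℂ) (hlam : lam ≠ 0) (j : ℕ) :
    ∀ c : ℕ → W, {k : ℕ | c k ≠ 0}.Finite → (Tcol lam)^[j] c = 0 → c = 0 := by
  induction j with
  | zero => intro c _ h; exact h
  | succ j ih =>
    intro c hfin hT
    rw [Function.iterate_succ_apply] at hT
    exact Tcol_inj lam hlam c hfin (ih _ (Tcol_finsupp lam c hfin) hT)

lemma Tcol_zero_iter (j : ℕ) : ∀ c : ℕ → W,
    (Tcol (0 : ℂ))^[j] c 0 = ((j.factorial : ℂ)) • c j := by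
  induction j with
  | zero => intro c; simp
  | succ j ih =>
    intro c
    rw [Function.iterate_succ_apply, ih (Tcol 0 c)]
    simp only [Tcol, zero_smul, zero_add, smul_smul, Nat.factorial_succ]
    congr 1
    push_cast
    ring

lemma Tcol_map_zero (lam : ℂ) : Tcol lam (0 : ℕ → W) = 0 := by
  funext k; simp [Tcol]

end aux

/-- If `f ∈ W[log x]{x}` satisfies `(x d/dx − a)^m f = 0` with `m` smallest, then the
coefficient of `xᵃ (log x)^{m-1}` in `f` is nonzero. -/
theorem top_log_coefficient_nonzero (W : Type*) [AddCommGroup W] [Module ℂ W]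
    (a : ℂ) (m : ℕ) (hm : 0 < m) (f : ℂ → ℕ → W)
    (hf : ∀ n : ℂ, {k : ℕ | f n k ≠ 0}.Finite)
    (hL : (Lop W a)^[m] f = 0) (hL' : (Lop W a)^[m - 1] f ≠ 0) :
    f a (m - 1) ≠ 0 := by
  set g := (Lop W a)^[m - 1] f with hg
  have hm1 : m - 1 + 1 = m := Nat.succ_pred_eq_of_pos hm
  have h1 : Lop W a g = 0 := by
    rw [← hm1, Function.iterate_succ_apply'] at hL
    exact hL
  -- for n ≠ a, the whole column f n vanishes, hence so does g n
  have hgn : ∀ n : ℂ, n ≠ a → g n = 0 := by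
    intro n hn
    have hfn : f n = 0 := by
      apply Tcol_iter_inj (n - a) (sub_ne_zero.mpr hn) m (f n) (hf n)
      rw [← Lop_iter_col a m f n, hL]; rfl
    rw [hg, Lop_iter_col a (m - 1) f n, hfn,
      Function.iterate_fixed (Tcol_map_zero (n - a)) (m - 1)]
  -- g a k = 0 for k ≥ 1
  have hgk : ∀ k : ℕ, g a (k + 1) = 0 := by
    intro k
    have := congrFun (congrFun h1 a) k
    simp only [Lop, sub_self, zero_smul, zero_add, Pi.zero_apply, smul_eq_zero] at this
    rcases this with h | h
    · exact absurd h (Nat.cast_add_one_ne_zero k)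
    · exact h
  -- hence g a 0 ≠ 0
  have hga0 : g a 0 ≠ 0 := by
    intro h0
    apply hL'
    funext n k
    by_cases hn : n = a
    · subst hn
      cases k with
      | zero => exact h0
      | succ k => exact hgk k
    · rw [hgn n hn]; rfl
  -- compute g a 0 in terms of f a (m-1)
  intro hfa
  apply hga0
  have : g a 0 = ((m - 1).factorial : ℂ) • f a (m - 1) := by
    rw [hg, Lop_iter_col a (m - 1) f a, sub_self, Tcol_zero_iter]
  rw [this, hfa, smul_zero]
end

section
/- For all t, p, k, q ∈ ℕ, A^t(T(p,k,q)) = ∑_{(i,j,l)∈ℕ³, i+j+l=t} (t!/(i!·j!·l!)) · ((k+1)(k+2)⋯(k+l)) • T(p+i, k+l, q+j), where A^t denotes the t-fold iterate of the linear map A, each coefficient (t!/(i!·j!·l!))·(k+1)(k+2)⋯(k+l) is a natural number, and the ascending factorial factor (k+1)(k+2)⋯(k+l) is 1 when l = 0. -/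
open Nat Finset

lemma dvd3 (a b c : ℕ) : a ! * b ! * c ! ∣ (a + b + c)! :=
  dvd_trans (mul_dvd_mul_right (Nat.factorial_mul_factorial_dvd_factorial_add a b) _)
    (Nat.factorial_mul_factorial_dvd_factorial_add (a + b) c)

lemma core_div (a b c k l n : ℕ) (h : a + b + c = n) :
    a ! * b ! * c ! * k ! * (n ! / (a ! * b ! * c !) * ((k + l)! / k !)) = n ! * (k + l)! := by
  have d1 : a ! * b ! * c ! ∣ n ! := h ▸ dvd3 a b c
  have d2 : k ! ∣ (k + l)! := Nat.factorial_dvd_factorial (Nat.le_add_right _ _)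
  rw [Nat.div_mul_div_comm d1 d2, Nat.mul_div_cancel' (mul_dvd_mul d1 d2)]

lemma key (a b c k t : ℕ) (h : a + b + c = t + 1) :
    (if a = 0 then 0 else t ! / ((a - 1)! * b ! * c !) * ((k + c)! / k !))
      + (k + 1) * (if c = 0 then 0 else t ! / (a ! * b ! * (c - 1)!) * ((k + c)! / (k + 1)!))
      + (if b = 0 then 0 else t ! / (a ! * (b - 1)! * c !) * ((k + c)! / k !))
    = (t + 1)! / (a ! * b ! * c !) * ((k + c)! / k !) := by
  have hP : 0 < a ! * b ! * c ! * k ! := by positivity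
  apply Nat.eq_of_mul_eq_mul_left hP
  have h0 : a ! * b ! * c ! * k ! * (if a = 0 then 0 else t ! / ((a - 1)! * b ! * c !) * ((k + c)! / k !))
      = a * (t ! * (k + c)!) := by
    cases a with
    | zero => simp
    | succ a' =>
      rw [if_neg (Nat.succ_ne_zero a'), Nat.add_sub_cancel]
      calc (a' + 1)! * b ! * c ! * k ! * (t ! / (a' ! * b ! * c !) * ((k + c)! / k !))
          = (a' + 1) * (a' ! * b ! * c ! * k ! * (t ! / (a' ! * b ! * c !) * ((k + c)! / k !))) := by
            rw [Nat.factorial_succ]; ring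
        _ = (a' + 1) * (t ! * (k + c)!) := by rw [core_div a' b c k c t (by omega)]
  have h1 : a ! * b ! * c ! * k ! * (if b = 0 then 0 else t ! / (a ! * (b - 1)! * c !) * ((k + c)! / k !))
      = b * (t ! * (k + c)!) := by
    cases b with
    | zero => simp
    | succ b' =>
      rw [if_neg (Nat.succ_ne_zero b'), Nat.add_sub_cancel]
      calc a ! * (b' + 1)! * c ! * k ! * (t ! / (a ! * b' ! * c !) * ((k + c)! / k !))
          = (b' + 1) * (a ! * b' ! * c ! * k ! * (t ! / (a ! * b' ! * c !) * ((k + c)! / k !))) := by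
            rw [Nat.factorial_succ]; ring
        _ = (b' + 1) * (t ! * (k + c)!) := by rw [core_div a b' c k c t (by omega)]
  have h2 : a ! * b ! * c ! * k ! * ((k + 1) * (if c = 0 then 0 else t ! / (a ! * b ! * (c - 1)!) * ((k + c)! / (k + 1)!)))
      = c * (t ! * (k + c)!) := by
    cases c with
    | zero => simp
    | succ c' =>
      rw [if_neg (Nat.succ_ne_zero c'), Nat.add_sub_cancel]
      have hkc : k + (c' + 1) = (k + 1) + c' := by omega
      rw [hkc]
      calc a ! * b ! * (c' + 1)! * k ! * ((k + 1) * (t ! / (a ! * b ! * c' !) * (((k + 1) + c')! / (k + 1)!)))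
          = (c' + 1) * (a ! * b ! * c' ! * (k + 1)! * (t ! / (a ! * b ! * c' !) * (((k + 1) + c')! / (k + 1)!))) := by
            rw [Nat.factorial_succ c', Nat.factorial_succ k]; ring
        _ = (c' + 1) * (t ! * ((k + 1) + c')!) := by rw [core_div a b c' (k + 1) c' t (by omega)]
  have hR : a ! * b ! * c ! * k ! * ((t + 1)! / (a ! * b ! * c !) * ((k + c)! / k !))
      = (t + 1)! * (k + c)! := core_div a b c k c (t + 1) h
  rw [mul_add, mul_add, h0, h1, h2, hR]
  calc a * (t ! * (k + c)!) + c * (t ! * (k + c)!) + b * (t ! * (k + c)!)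
      = (a + b + c) * (t ! * (k + c)!) := by ring
    _ = (t + 1)! * (k + c)! := by rw [h, Nat.factorial_succ]; ring

lemma sum_shift {M : Type*} [AddCommMonoid M] (t : ℕ) (i : Fin 3) (F : (Fin 3 → ℕ) → M) :
    ∑ y ∈ Finset.Nat.antidiagonalTuple 3 t, F (y + Pi.single i 1)
      = ∑ x ∈ Finset.Nat.antidiagonalTuple 3 (t + 1), if x i = 0 then 0 else F x := by
  rw [Finset.sum_ite, Finset.sum_const_zero, zero_add]
  refine Finset.sum_bij' (i := fun y _ => y + Pi.single i 1) (j := fun x _ => x - Pi.single i 1)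
    ?_ ?_ ?_ ?_ ?_
  case refine_1 =>
    intro y hy
    rw [Finset.Nat.mem_antidiagonalTuple] at hy
    rw [Finset.mem_filter, Finset.Nat.mem_antidiagonalTuple]
    constructor
    · simp only [Pi.add_apply]
      rw [Finset.sum_add_distrib, hy, Fintype.sum_pi_single' i 1]
    · simp [Pi.single_apply]
  case refine_2 =>
    intro x hx
    rw [Finset.mem_filter, Finset.Nat.mem_antidiagonalTuple] at hx
    rw [Finset.Nat.mem_antidiagonalTuple]
    have hle : ∀ j ∈ (Finset.univ : Finset (Fin 3)), (Pi.single i 1 : Fin 3 → ℕ) j ≤ x j := by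
      intro j _
      rcases eq_or_ne j i with rfl | hne
      · simpa [Pi.single_apply] using Nat.one_le_iff_ne_zero.mpr hx.2
      · simp [Pi.single_apply, hne]
    calc ∑ j, (x - Pi.single i 1 : Fin 3 → ℕ) j = ∑ j, (x j - (Pi.single i 1 : Fin 3 → ℕ) j) := rfl
      _ = (∑ j, x j) - ∑ j, Pi.single i 1 j := Finset.sum_tsub_distrib _ hle
      _ = t := by rw [hx.1, Fintype.sum_pi_single' i 1]; omega
  case refine_3 =>
    intro y _
    funext j
    simp [Nat.add_sub_cancel]
  case refine_4 =>
    intro x hx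
    rw [Finset.mem_filter, Finset.Nat.mem_antidiagonalTuple] at hx
    funext j
    rcases eq_or_ne j i with rfl | hne
    · simp [Pi.single_apply, Nat.sub_add_cancel (Nat.one_le_iff_ne_zero.mpr hx.2)]
    · simp [Pi.single_apply, hne]
  case refine_5 =>
    intro y _
    rfl

/-- Formula (3.27)/(3.28): iterating the recursion
`A(T(p,k,q)) = T(p+1,k,q) + (k+1)•T(p,k+1,q) + T(p,k,q+1)` gives
`A^t(T(p,k,q)) = ∑_{i+j+l=t} (t!/(i!j!l!)) (k+1)⋯(k+l) • T(p+i, k+l, q+j)`. -/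
theorem iterated_recursion_formula (W : Type*) [AddCommGroup W] [Module ℂ W]
    (A : W →ₗ[ℂ] W) (T : ℕ → ℕ → ℕ → W)
    (hT : ∀ p k q, A (T p k q) = T (p + 1) k q + (k + 1) • T p (k + 1) q + T p k (q + 1))
    (t p k q : ℕ) :
    (A ^ t) (T p k q) =
      ∑ x ∈ Finset.Nat.antidiagonalTuple 3 t,
        ((t.factorial / ((x 0).factorial * (x 1).factorial * (x 2).factorial)) *
          ((k + x 2).factorial / k.factorial)) • T (p + x 0) (k + x 2) (q + x 1) := by
  induction t generalizing p k q with
  | zero =>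
    rw [Finset.Nat.antidiagonalTuple_zero_right, Finset.sum_singleton]
    simp [Nat.div_self (Nat.factorial_pos k)]
  | succ t ih =>
    rw [pow_succ, Module.End.mul_apply, hT p k q, map_add, map_add, map_nsmul, ih, ih, ih]
    have e0 : ∑ y ∈ Finset.Nat.antidiagonalTuple 3 t,
        ((t.factorial / ((y 0).factorial * (y 1).factorial * (y 2).factorial)) *
          ((k + y 2).factorial / k.factorial)) • T (p + 1 + y 0) (k + y 2) (q + y 1)
        = ∑ x ∈ Finset.Nat.antidiagonalTuple 3 (t + 1),
            if x 0 = 0 then 0 else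
              ((t.factorial / ((x 0 - 1).factorial * (x 1).factorial * (x 2).factorial)) *
                ((k + x 2).factorial / k.factorial)) • T (p + x 0) (k + x 2) (q + x 1) := by
      rw [← sum_shift t 0 (fun x =>
        ((t.factorial / ((x 0 - 1).factorial * (x 1).factorial * (x 2).factorial)) *
          ((k + x 2).factorial / k.factorial)) • T (p + x 0) (k + x 2) (q + x 1))]
      refine Finset.sum_congr rfl fun y _ => ?_
      simp only [Pi.add_apply, Pi.single_apply]
      norm_num
      congr 2 <;> omega
    have e2 : ∑ y ∈ Finset.Nat.antidiagonalTuple 3 t,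
        ((t.factorial / ((y 0).factorial * (y 1).factorial * (y 2).factorial)) *
          ((k + 1 + y 2).factorial / (k + 1).factorial)) • T (p + y 0) (k + 1 + y 2) (q + y 1)
        = ∑ x ∈ Finset.Nat.antidiagonalTuple 3 (t + 1),
            if x 2 = 0 then 0 else
              ((t.factorial / ((x 0).factorial * (x 1).factorial * (x 2 - 1).factorial)) *
                ((k + x 2).factorial / (k + 1).factorial)) • T (p + x 0) (k + x 2) (q + x 1) := by
      rw [← sum_shift t 2 (fun x =>
        ((t.factorial / ((x 0).factorial * (x 1).factorial * (x 2 - 1).factorial)) *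
          ((k + x 2).factorial / (k + 1).factorial)) • T (p + x 0) (k + x 2) (q + x 1))]
      refine Finset.sum_congr rfl fun y _ => ?_
      simp only [Pi.add_apply, Pi.single_apply]
      norm_num
      rw [show k + (y 2 + 1) = k + 1 + y 2 from by omega]
      congr 2 <;> omega
    have e1 : ∑ y ∈ Finset.Nat.antidiagonalTuple 3 t,
        ((t.factorial / ((y 0).factorial * (y 1).factorial * (y 2).factorial)) *
          ((k + y 2).factorial / k.factorial)) • T (p + y 0) (k + y 2) (q + 1 + y 1)
        = ∑ x ∈ Finset.Nat.antidiagonalTuple 3 (t + 1),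
            if x 1 = 0 then 0 else
              ((t.factorial / ((x 0).factorial * (x 1 - 1).factorial * (x 2).factorial)) *
                ((k + x 2).factorial / k.factorial)) • T (p + x 0) (k + x 2) (q + x 1) := by
      rw [← sum_shift t 1 (fun x =>
        ((t.factorial / ((x 0).factorial * (x 1 - 1).factorial * (x 2).factorial)) *
          ((k + x 2).factorial / k.factorial)) • T (p + x 0) (k + x 2) (q + x 1))]
      refine Finset.sum_congr rfl fun y _ => ?_
      simp only [Pi.add_apply, Pi.single_apply]
      norm_num
      congr 2 <;> omega
    rw [e0, e2, e1, Finset.smul_sum]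
    simp only [smul_ite, smul_zero, smul_smul]
    rw [← Finset.sum_add_distrib, ← Finset.sum_add_distrib]
    refine Finset.sum_congr rfl fun x hx => ?_
    have hsum : x 0 + x 1 + x 2 = t + 1 := by
      have := Finset.Nat.mem_antidiagonalTuple.mp hx
      rwa [Fin.sum_univ_three] at this
    have hkey := key (x 0) (x 1) (x 2) k t hsum
    calc (if x 0 = 0 then 0 else
            ((t.factorial / ((x 0 - 1).factorial * (x 1).factorial * (x 2).factorial)) *
              ((k + x 2).factorial / k.factorial)) • T (p + x 0) (k + x 2) (q + x 1))
          + (if x 2 = 0 then 0 else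
            ((k + 1) * ((t.factorial / ((x 0).factorial * (x 1).factorial * (x 2 - 1).factorial)) *
              ((k + x 2).factorial / (k + 1).factorial))) • T (p + x 0) (k + x 2) (q + x 1))
          + (if x 1 = 0 then 0 else
            ((t.factorial / ((x 0).factorial * (x 1 - 1).factorial * (x 2).factorial)) *
              ((k + x 2).factorial / k.factorial)) • T (p + x 0) (k + x 2) (q + x 1))
        = ((if x 0 = 0 then 0 else
            (t.factorial / ((x 0 - 1).factorial * (x 1).factorial * (x 2).factorial)) *
              ((k + x 2).factorial / k.factorial))
          + (k + 1) * (if x 2 = 0 then 0 else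
            (t.factorial / ((x 0).factorial * (x 1).factorial * (x 2 - 1).factorial)) *
              ((k + x 2).factorial / (k + 1).factorial))
          + (if x 1 = 0 then 0 else
            (t.factorial / ((x 0).factorial * (x 1 - 1).factorial * (x 2).factorial)) *
              ((k + x 2).factorial / k.factorial))) • T (p + x 0) (k + x 2) (q + x 1) := by
          split_ifs <;> simp [add_smul]
      _ = _ := by rw [hkey]
end

section
/- For all t, p, k, q ∈ ℕ, (t! · C(k+t, t)) • T(p, k+t, q) = ∑_{(i,j,l)∈ℕ³, i+j+l=t} (−1)^{i+j} · (t!/(i!·j!·l!)) • A^l(T(p+i, k, q+j)), where C(k+t,t) denotes the binomial coefficient, t!/(i!·j!·l!) is the multinomial coefficient, and A^l denotes the l-fold iterate of the linear map A. -/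
/-!
On functions `ℕ × ℕ → W` let `S₁`, `S₂` be the shifts of the two indices and let `A` act
pointwise. The recursion says that `N = A - S₁ - S₂` sends the slice `(p, q) ↦ T(p, k, q)` to
`k + 1` times the slice at `k + 1`, so `Nᵗ` sends it to `(k + 1)(k + 2)⋯(k + t) = t! · C(k + t, t)`
times the slice at `k + t`. Since `A`, `S₁`, `S₂` commute, `Nᵗ` expands by the multinomial theorem,
and evaluating at `(p, q)` gives the formula.
-/

open Finset

theorem add_add_pow_eq_sum_antidiagonalTuple {R : Type*} [Semiring R] {a b c : R}
    (hab : Commute a b) (hac : Commute a c) (hbc : Commute b c) (n : ℕ) :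
    (a + b + c) ^ n = ∑ x ∈ Nat.antidiagonalTuple 3 n,
      (Nat.multinomial univ x : R) * (a ^ x 0 * b ^ x 1 * c ^ x 2) := by
  have hcomm : ((univ : Finset (Fin 3)) : Set (Fin 3)).Pairwise
      (Function.onFun Commute ![a, b, c]) := by
    intro i _ j _ _
    fin_cases i <;> fin_cases j <;> simp_all [Function.onFun, Commute.symm_iff]
  have h := sum_pow_eq_sum_piAntidiag_of_commute univ ![a, b, c] hcomm n
  rw [Fin.sum_univ_three, piAntidiag_univ_fin_eq_antidiagonalTuple] at h
  refine h.trans (sum_congr rfl fun x _ => ?_)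
  congr 1
  exact (Multiset.noncommProd_coe [a ^ x 0, b ^ x 1, c ^ x 2] _).trans (by simp [mul_assoc])

theorem sub_sub_pow_eq_sum_antidiagonalTuple {R : Type*} [Ring R] {a b c : R}
    (hab : Commute a b) (hac : Commute a c) (hbc : Commute b c) (n : ℕ) :
    (c - a - b) ^ n = ∑ x ∈ Nat.antidiagonalTuple 3 n,
      ((-1 : ℤ) ^ (x 0 + x 1) * Nat.multinomial univ x) • (a ^ x 0 * b ^ x 1 * c ^ x 2) := by
  have neg_pow_eq_zsmul (r : R) (k : ℕ) : (-r) ^ k = (-1 : ℤ) ^ k • r ^ k := by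
    rw [neg_pow, zsmul_eq_mul]; push_cast; rfl
  rw [show c - a - b = -a + -b + c by abel,
    add_add_pow_eq_sum_antidiagonalTuple hab.neg_left.neg_right hac.neg_left hbc.neg_left]
  refine sum_congr rfl fun x _ => ?_
  rw [neg_pow_eq_zsmul, neg_pow_eq_zsmul, ← nsmul_eq_mul, ← Nat.cast_smul_eq_nsmul ℤ]
  simp only [smul_mul_assoc, mul_smul_comm, smul_smul]
  ring_nf

namespace LinearMap

variable {R M ι : Type*} [Semiring R] [AddCommMonoid M] [Module R M]

theorem funLeft_pow (f : ι → ι) (n : ℕ) : funLeft R M f ^ n = funLeft R M f^[n] := by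
  induction n with
  | zero => rfl
  | succ n ih => rw [pow_succ', ih, Function.iterate_succ]; rfl

theorem compLeft_pow (f : Module.End R M) (ι : Type*) (n : ℕ) :
    LinearMap.compLeft f ι ^ n = LinearMap.compLeft (f ^ n) ι := by
  induction n with
  | zero => rfl
  | succ n ih => rw [pow_succ, ih, pow_succ]; rfl

theorem commute_funLeft {f g : ι → ι} (h : Function.Commute f g) :
    Commute (funLeft R M f) (funLeft R M g) := by
  ext F x
  simp [h.eq x]

theorem commute_funLeft_compLeft (g : ι → ι) (f : Module.End R M) :
    Commute (funLeft R M g) (LinearMap.compLeft f ι) :=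
  rfl

end LinearMap

open LinearMap

section RaisingOperator

variable {R W : Type*} [Semiring R] [AddCommGroup W] [Module R W]

def raisingOperator (A : Module.End R W) : Module.End R (ℕ × ℕ → W) :=
  LinearMap.compLeft A _ - funLeft R W (· + (1, 0)) - funLeft R W (· + (0, 1))

theorem raisingOperator_pow_apply (A : Module.End R W) (t : ℕ) (F : ℕ × ℕ → W) (p q : ℕ) :
    (raisingOperator A ^ t) F (p, q) = ∑ x ∈ Nat.antidiagonalTuple 3 t,
      ((-1 : ℤ) ^ (x 0 + x 1) * Nat.multinomial univ x) • (A ^ x 2) (F (p + x 0, q + x 1)) := by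
  rw [raisingOperator, sub_sub_pow_eq_sum_antidiagonalTuple
      (commute_funLeft fun _ => by abel) (commute_funLeft_compLeft _ _)
      (commute_funLeft_compLeft _ _),
    LinearMap.sum_apply, Finset.sum_apply]
  refine sum_congr rfl fun x _ => ?_
  simp only [LinearMap.smul_apply, Pi.smul_apply, Module.End.mul_apply, funLeft_pow, compLeft_pow,
    funLeft_apply, compLeft_apply, Function.comp_apply, add_right_iterate_apply, Prod.smul_mk,
    smul_eq_mul, mul_one, mul_zero, Prod.mk_add_mk, add_zero]

variable {A : Module.End R W} {T : ℕ → ℕ → ℕ → W}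

theorem raisingOperator_slice
    (hT : ∀ p k q, A (T p k q) = T (p + 1) k q + (k + 1) • T p (k + 1) q + T p k (q + 1))
    (k : ℕ) :
    raisingOperator A (fun x => T x.1 k x.2) = (k + 1) • fun x => T x.1 (k + 1) x.2 := by
  ext ⟨p, q⟩
  simp only [raisingOperator, LinearMap.sub_apply, compLeft_apply, funLeft_apply,
    Function.comp_apply, Pi.sub_apply, Pi.smul_apply, Prod.mk_add_mk, add_zero, hT]
  abel

theorem raisingOperator_pow_slice
    (hT : ∀ p k q, A (T p k q) = T (p + 1) k q + (k + 1) • T p (k + 1) q + T p k (q + 1))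
    (t k : ℕ) :
    (raisingOperator A ^ t) (fun x => T x.1 k x.2) =
      (k + 1).ascFactorial t • fun x => T x.1 (k + t) x.2 := by
  induction t with
  | zero => simp
  | succ t ih =>
    rw [pow_succ', Module.End.mul_apply, ih, map_nsmul, raisingOperator_slice hT, smul_smul,
      Nat.ascFactorial_succ, add_right_comm k 1 t, mul_comm, add_assoc]

end RaisingOperator

/-- Formula (3.63): from the recursion
`A(T(p,k,q)) = T(p+1,k,q) + (k+1)•T(p,k+1,q) + T(p,k,q+1)` one has
`binom(k+t,t) t! • T(p,k+t,q) = ∑_{i+j+l=t} (-1)^{i+j} (t!/(i!j!l!)) • A^l(T(p+i,k,q+j))`. -/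
theorem inverted_recursion_formula (W : Type*) [AddCommGroup W] [Module ℂ W]
    (A : W →ₗ[ℂ] W) (T : ℕ → ℕ → ℕ → W)
    (hT : ∀ p k q, A (T p k q) = T (p + 1) k q + (k + 1) • T p (k + 1) q + T p k (q + 1))
    (t p k q : ℕ) :
    (t.factorial * (k + t).choose t) • T p (k + t) q =
      ∑ x ∈ Finset.Nat.antidiagonalTuple 3 t,
        ((-1 : ℤ) ^ (x 0 + x 1) *
          ((t.factorial / ((x 0).factorial * (x 1).factorial * (x 2).factorial) : ℕ) : ℤ)) •
          (A ^ (x 2 : ℕ)) (T (p + x 0) k (q + x 1)) := by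
  have h := congrFun (raisingOperator_pow_slice hT t k) (p, q)
  rw [raisingOperator_pow_apply, Pi.smul_apply] at h
  rw [← Nat.ascFactorial_eq_factorial_mul_choose, ← h]
  refine sum_congr rfl fun x hx => ?_
  rw [Nat.multinomial, Fin.prod_univ_three, Nat.mem_antidiagonalTuple.1 hx]
end
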